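/- arXiv:2101.02775 — 5 statements merged into one kernel-verified Lean document; each statement's English description precedes it below -/
import Mathlib

section
/- Let f(z) = γ + Σ_{j=1}^n σ_j/(t_j − z) with n ≥ 1, γ > 0, σ_j > 0, and 0 ≤ t₁ < t₂ < … < tₙ. Then there exist real numbers x₁,…,xₙ satisfying the interlacing property 0 ≤ t₁ < x₁ < t₂ < x₂ < … < tₙ < xₙ such that f(z) = γ·Π_{j=1}^n (z − x_j)/(z − t_j) for all z ∈ ℂ ∖ {t₁,…,tₙ}; in particular the x_j are exactly the n distinct real zeros of f. -/
open Complex MeasureTheory Polynomial Matrix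
open scoped ComplexConjugate

noncomputable section

/-- The cut `[0, ∞)` viewed as a subset of `ℂ`. -/
def SCut : Set ℂ := {z : ℂ | 0 ≤ z.re ∧ z.im = 0}

/-- The slit domain `ℂ \ [0, ∞)`. -/
def SDom : Set ℂ := {z : ℂ | ¬ (0 ≤ z.re ∧ z.im = 0)}

/-- The Stieltjes class `𝔖`: functions analytic on `ℂ \ [0,∞)` that are either
nonnegative real constants or satisfy (i) `Im f(z) > 0` on the upper half-plane,
(ii) `f(x) > 0` for real `x < 0`, (iii) `conj (f z) = f (conj z)`. -/
def StieltjesClass (f : ℂ → ℂ) : Prop :=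
  AnalyticOnNhd ℂ f SDom ∧
  ((∃ c : ℝ, 0 ≤ c ∧ ∀ z ∈ SDom, f z = (c : ℂ)) ∨
    ((∀ z : ℂ, 0 < z.im → 0 < (f z).im) ∧
     (∀ x : ℝ, x < 0 → ∃ r : ℝ, 0 < r ∧ f (x : ℂ) = (r : ℂ)) ∧
     (∀ z ∈ SDom, conj (f z) = f (conj z))))

lemma aux_prod_split {K : Type*} [Field K] {n : ℕ} (t : Fin n → K) (z : K)
    (hz : ∀ k, z - t k ≠ 0) (k : Fin n) :
    ∏ j ∈ Finset.univ.erase k, (z - t j) = (∏ j, (z - t j)) / (z - t k) := by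
  rw [eq_div_iff (hz k), mul_comm]
  exact Finset.mul_prod_erase Finset.univ (fun j => z - t j) (Finset.mem_univ k)

lemma aux_rat {K : Type*} [Field K] {n : ℕ} (γ : K) (t s : Fin n → K) (z : K)
    (hz : ∀ k, z - t k ≠ 0) :
    γ + ∑ k, s k / (t k - z) =
      (γ * ∏ j, (z - t j) - ∑ k, s k * ∏ j ∈ Finset.univ.erase k, (z - t j)) /
        ∏ j, (z - t j) := by
  have hD : (∏ j, (z - t j)) ≠ 0 := Finset.prod_ne_zero_iff.2 fun j _ => hz j
  rw [sub_div, mul_div_assoc, div_self hD, mul_one, Finset.sum_div, sub_eq_add_neg,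
    ← Finset.sum_neg_distrib]
  congr 1
  refine Finset.sum_congr rfl fun k _ => ?_
  rw [aux_prod_split t z hz k, ← mul_div_assoc, div_div, mul_comm (z - t k), ← div_div,
    mul_div_assoc, div_self hD, mul_one, ← div_neg, neg_sub]

theorem statement12 (n : ℕ) (hn : 1 ≤ n) (γ : ℝ) (hγ : 0 < γ)
    (t s : Fin n → ℝ) (ht0 : ∀ k, 0 ≤ t k) (hmono : StrictMono t) (hs : ∀ k, 0 < s k) :
    ∃ x : Fin n → ℝ,
      (∀ k : Fin n, t k < x k) ∧
      (∀ k : Fin n, ∀ h : (k : ℕ) + 1 < n, x k < t ⟨(k : ℕ) + 1, h⟩) ∧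
      (∀ z : ℂ, (∀ k, z ≠ (t k : ℂ)) →
        (γ : ℂ) + ∑ k, (s k : ℂ) / ((t k : ℂ) - z) =
          (γ : ℂ) * ∏ k, (z - (x k : ℂ)) / (z - (t k : ℂ))) ∧
      (∀ z : ℂ, (∀ k, z ≠ (t k : ℂ)) →
        ((γ : ℂ) + ∑ k, (s k : ℂ) / ((t k : ℂ) - z) = 0 ↔ ∃ k, z = (x k : ℂ))) := by
  classical
  set P : Polynomial ℝ := ∏ j, (X - C (t j)) with hPdef
  set q : Polynomial ℝ :=
    C γ * P - ∑ k, C (s k) * ∏ j ∈ Finset.univ.erase k, (X - C (t j)) with hqdef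
  have heval : ∀ y : ℝ, q.eval y =
      γ * ∏ j, (y - t j) - ∑ k, s k * ∏ j ∈ Finset.univ.erase k, (y - t j) := by
    intro y
    simp [hqdef, hPdef, eval_prod, eval_finset_sum]
  have hevalt : ∀ k : Fin n,
      q.eval (t k) = -(s k * ∏ j ∈ Finset.univ.erase k, (t k - t j)) := by
    intro k
    rw [heval, Finset.prod_eq_zero (Finset.mem_univ k) (sub_self (t k)),
      Finset.sum_eq_single k
        (fun m _ hm => by
          rw [Finset.prod_eq_zero (Finset.mem_erase.2 ⟨hm.symm, Finset.mem_univ k⟩)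
            (sub_self (t k)), mul_zero])
        (fun h => absurd (Finset.mem_univ k) h)]
    ring
  -- sign at consecutive nodes
  have hpair : ∀ (k : Fin n) (h : (k : ℕ) + 1 < n),
      q.eval (t k) * q.eval (t ⟨(k : ℕ) + 1, h⟩) < 0 := by
    intro k h
    obtain ⟨k', hk'⟩ : ∃ k' : Fin n, (k' : ℕ) = (k : ℕ) + 1 := ⟨⟨(k : ℕ) + 1, h⟩, rfl⟩
    have hkeq : (⟨(k : ℕ) + 1, h⟩ : Fin n) = k' := Fin.ext hk'.symm
    rw [hkeq]
    have hkk' : k ≠ k' := by intro e; rw [e] at hk'; omega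
    have hltkk' : t k < t k' := hmono (by rw [Fin.lt_def, hk']; omega)
    have hsplit1 : ∏ j ∈ Finset.univ.erase k, (t k - t j) =
        (t k - t k') * ∏ j ∈ (Finset.univ.erase k).erase k', (t k - t j) :=
      (Finset.mul_prod_erase (Finset.univ.erase k) (fun j => t k - t j)
        (Finset.mem_erase.2 ⟨hkk'.symm, Finset.mem_univ _⟩)).symm
    have hsplit2 : ∏ j ∈ Finset.univ.erase k', (t k' - t j) =
        (t k' - t k) * ∏ j ∈ (Finset.univ.erase k).erase k', (t k' - t j) := by
      rw [Finset.erase_right_comm (a := k) (b := k')]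
      exact (Finset.mul_prod_erase (Finset.univ.erase k') (fun j => t k' - t j)
        (Finset.mem_erase.2 ⟨hkk', Finset.mem_univ _⟩)).symm
    have hprod : q.eval (t k) * q.eval (t k') =
        (s k * s k') * (((t k - t k') * (t k' - t k)) *
          ∏ j ∈ (Finset.univ.erase k).erase k', ((t k - t j) * (t k' - t j))) := by
      rw [hevalt k, hevalt k', hsplit1, hsplit2, Finset.prod_mul_distrib]
      ring
    rw [hprod]
    have h1 : 0 < s k * s k' := mul_pos (hs k) (hs k')
    have h2 : (t k - t k') * (t k' - t k) < 0 :=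
      mul_neg_of_neg_of_pos (sub_neg.2 hltkk') (sub_pos.2 hltkk')
    have h3 : 0 < ∏ j ∈ (Finset.univ.erase k).erase k', ((t k - t j) * (t k' - t j)) := by
      refine Finset.prod_pos fun j hj => ?_
      rw [Finset.mem_erase, Finset.mem_erase] at hj
      obtain ⟨hjk', hjk, -⟩ := hj
      have hv1 : (j : ℕ) ≠ (k : ℕ) := fun hv => hjk (Fin.ext hv)
      have hv2 : (j : ℕ) ≠ (k' : ℕ) := fun hv => hjk' (Fin.ext hv)
      rcases lt_or_gt_of_ne hv1 with hv | hv
      · have hj1 : t j < t k := hmono (by rwa [Fin.lt_def])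
        exact mul_pos (sub_pos.2 hj1) (sub_pos.2 (hj1.trans hltkk'))
      · have hv' : (k' : ℕ) < (j : ℕ) := by omega
        have hj2 : t k' < t j := hmono (by rwa [Fin.lt_def])
        exact mul_pos_of_neg_of_neg (sub_neg.2 (hltkk'.trans hj2)) (sub_neg.2 hj2)
    exact mul_neg_of_pos_of_neg h1 (mul_neg_of_neg_of_pos h2 h3)
  -- a point to the right of everything, where q is positive
  set b : ℝ := 1 + ∑ k, (t k + n * s k / γ) with hbdef
  have hbk : ∀ k : Fin n, t k + (n : ℝ) * s k / γ < b := by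
    intro k
    have h1 : ∀ j : Fin n, 0 ≤ t j + (n : ℝ) * s j / γ := fun j =>
      add_nonneg (ht0 j) (div_nonneg (mul_nonneg (Nat.cast_nonneg n) (hs j).le) hγ.le)
    have := Finset.single_le_sum (fun j _ => h1 j) (Finset.mem_univ k)
    linarith
  have hbt : ∀ k : Fin n, t k < b := by
    intro k
    have h0 : 0 < (n : ℝ) * s k / γ :=
      div_pos (mul_pos (by exact_mod_cast hn) (hs k)) hγ
    calc t k < t k + (n : ℝ) * s k / γ := lt_add_of_pos_right _ h0
    _ < b := hbk k
  have hbne : ∀ k : Fin n, b - t k ≠ 0 := fun k => sub_ne_zero.2 (hbt k).ne'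
  have hqb : 0 < q.eval b := by
    have hrat := aux_rat γ t s b hbne
    have hDpos : 0 < ∏ j, (b - t j) :=
      Finset.prod_pos fun j _ => sub_pos.2 (hbt j)
    rw [eq_div_iff hDpos.ne'] at hrat
    have hnum : q.eval b = (γ + ∑ k, s k / (t k - b)) * ∏ j, (b - t j) := by
      rw [heval b]; exact hrat.symm
    rw [hnum]
    refine mul_pos ?_ hDpos
    have hsum : ∑ k, s k / (t k - b) = -∑ k, s k / (b - t k) := by
      rw [← Finset.sum_neg_distrib]
      exact Finset.sum_congr rfl fun k _ => by rw [← div_neg, neg_sub]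
    rw [hsum]
    have hbound : ∀ k : Fin n, s k / (b - t k) < γ / n := by
      intro k
      have h1 : (n : ℝ) * s k / γ < b - t k := by linarith [hbk k]
      have h2 : 0 < (n : ℝ) * s k / γ :=
        div_pos (mul_pos (by exact_mod_cast hn) (hs k)) hγ
      have h3 : s k / (b - t k) < s k / ((n : ℝ) * s k / γ) :=
        div_lt_div_of_pos_left (hs k) h2 h1
      have h4 : s k / ((n : ℝ) * s k / γ) = γ / n := by
        have hnn : (n : ℝ) ≠ 0 := by positivity
        have hsn : s k ≠ 0 := (hs k).ne'
        field_simp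
      linarith [h3, h4.le]
    have hsum2 : ∑ k, s k / (b - t k) < ∑ _k : Fin n, γ / n :=
      Finset.sum_lt_sum_of_nonempty (Finset.univ_nonempty_iff.2 ⟨⟨0, hn⟩⟩)
        fun k _ => hbound k
    have : (∑ _k : Fin n, γ / n) = γ := by
      rw [Finset.sum_const, Finset.card_univ, Fintype.card_fin, nsmul_eq_mul]
      field_simp
    linarith
  -- find the roots by the intermediate value theorem
  have key : ∀ k : Fin n, ∃ y : ℝ, t k < y ∧
      (∀ h : (k : ℕ) + 1 < n, y < t ⟨(k : ℕ) + 1, h⟩) ∧ q.eval y = 0 := by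
    intro k
    by_cases hk : (k : ℕ) + 1 < n
    · set k' : Fin n := ⟨(k : ℕ) + 1, hk⟩ with hk'
      have hltkk' : t k < t k' := hmono (by simp [hk', Fin.lt_def])
      rcases mul_neg_iff.1 (hpair k hk) with ⟨h1, h2⟩ | ⟨h1, h2⟩
      · obtain ⟨y, hy, hy0⟩ := intermediate_value_Ioo' hltkk'.le
          (Polynomial.continuousOn (p := q)) (Set.mem_Ioo.2 ⟨h2, h1⟩)
        exact ⟨y, hy.1, fun _ => hy.2, hy0⟩
      · obtain ⟨y, hy, hy0⟩ := intermediate_value_Ioo hltkk'.le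
          (Polynomial.continuousOn (p := q)) (Set.mem_Ioo.2 ⟨h1, h2⟩)
        exact ⟨y, hy.1, fun _ => hy.2, hy0⟩
    · -- k is the last index
      have hneg : q.eval (t k) < 0 := by
        rw [hevalt k]
        have hpos : 0 < ∏ j ∈ Finset.univ.erase k, (t k - t j) := by
          refine Finset.prod_pos fun j hj => ?_
          have hjk := (Finset.mem_erase.1 hj).1
          have hv : (j : ℕ) ≠ (k : ℕ) := fun hv => hjk (Fin.ext hv)
          have hjlt := j.isLt
          have hklt := k.isLt
          exact sub_pos.2 (hmono (show j < k by rw [Fin.lt_def]; omega))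
        nlinarith [hs k]
      obtain ⟨y, hy, hy0⟩ := intermediate_value_Ioo (hbt k).le
        (Polynomial.continuousOn (p := q)) (Set.mem_Ioo.2 ⟨hneg, hqb⟩)
      exact ⟨y, hy.1, fun h => absurd h hk, hy0⟩
  choose x hx1 hx2 hx3 using key
  -- x is strictly monotone, hence injective
  have hxmono : StrictMono x := by
    intro k l hkl
    have hk1 : (k : ℕ) + 1 < n := lt_of_le_of_lt (Nat.succ_le_of_lt hkl) l.isLt
    have h1 : x k < t ⟨(k : ℕ) + 1, hk1⟩ := hx2 k hk1
    have h2 : t ⟨(k : ℕ) + 1, hk1⟩ ≤ t l :=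
      hmono.monotone (by simpa [Fin.le_def] using Nat.succ_le_of_lt hkl)
    exact lt_of_lt_of_le h1 (h2.trans (hx1 l).le)
  -- factorization of q
  set Px : Polynomial ℝ := ∏ j, (X - C (x j)) with hPxdef
  have hPm : P.Monic := monic_prod_of_monic _ _ fun j _ => monic_X_sub_C (t j)
  have hPxm : Px.Monic := monic_prod_of_monic _ _ fun j _ => monic_X_sub_C (x j)
  have hPnd : P.natDegree = n := by
    rw [hPdef, natDegree_prod_of_monic _ _ fun j _ => monic_X_sub_C (t j)]
    simp
  have hPxnd : Px.natDegree = n := by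
    rw [hPxdef, natDegree_prod_of_monic _ _ fun j _ => monic_X_sub_C (x j)]
    simp
  have hqfact : q = C γ * Px := by
    rw [← sub_eq_zero]
    set r : Polynomial ℝ := q - C γ * Px with hrdef
    have hrE : r = C γ * (P - Px) -
        ∑ k, C (s k) * ∏ j ∈ Finset.univ.erase k, (X - C (t j)) := by
      rw [hrdef, hqdef]; ring
    have hdiff : (P - Px).natDegree < n := by
      by_cases h0 : P - Px = 0
      · rw [h0]; simpa using Nat.lt_of_lt_of_le Nat.zero_lt_one hn
      · refine (natDegree_lt_iff_degree_lt h0).2 ?_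
        have hdeq : P.degree = Px.degree := by
          rw [degree_eq_natDegree hPm.ne_zero, degree_eq_natDegree hPxm.ne_zero, hPnd, hPxnd]
        have hlc : P.leadingCoeff = Px.leadingCoeff := by
          rw [hPm.leadingCoeff, hPxm.leadingCoeff]
        have hd := degree_sub_lt hdeq hPm.ne_zero hlc
        rwa [degree_eq_natDegree hPm.ne_zero, hPnd] at hd
    have hE : (∑ k, C (s k) * ∏ j ∈ Finset.univ.erase k, (X - C (t j))).natDegree < n := by
      have : ∀ k : Fin n, (C (s k) * ∏ j ∈ Finset.univ.erase k, (X - C (t j))).natDegree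
          ≤ n - 1 := by
        intro k
        refine (natDegree_C_mul_le _ _).trans ((natDegree_prod_le _ _).trans ?_)
        have : ∀ j ∈ Finset.univ.erase k, (X - C (t j)).natDegree = 1 := fun j _ =>
          natDegree_X_sub_C (t j)
        rw [Finset.sum_congr rfl this, Finset.sum_const, Finset.card_erase_of_mem
          (Finset.mem_univ k), Finset.card_univ, Fintype.card_fin, smul_eq_mul, mul_one]
      have := natDegree_sum_le_of_forall_le Finset.univ _ (fun k _ => this k)
      omega
    have hrdeg : r.natDegree < n := by
      have h1 : r.natDegree ≤ max (C γ * (P - Px)).natDegree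
          (∑ k, C (s k) * ∏ j ∈ Finset.univ.erase k, (X - C (t j))).natDegree := by
        rw [hrE]; exact natDegree_sub_le _ _
      have h2 : (C γ * (P - Px)).natDegree < n :=
        lt_of_le_of_lt (natDegree_C_mul_le _ _) hdiff
      omega
    have heval0 : ∀ k : Fin n, r.eval (x k) = 0 := by
      intro k
      have hPx0 : Px.eval (x k) = 0 := by
        rw [hPxdef, eval_prod]
        exact Finset.prod_eq_zero (Finset.mem_univ k) (by simp)
      simp [hrdef, hPx0, hx3 k]
    exact eq_zero_of_natDegree_lt_card_of_eval_eq_zero r hxmono.injective heval0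
      (by rwa [Fintype.card_fin])
  -- complex evaluations
  have haev : ∀ z : ℂ, (aeval z) q = (γ : ℂ) * ∏ j, (z - (x j : ℂ)) := by
    intro z
    rw [hqfact, hPxdef]
    simp only [_root_.map_mul, map_prod, map_sub, aeval_X, aeval_C, Complex.coe_algebraMap]
  have haev2 : ∀ z : ℂ, (aeval z) q =
      (γ : ℂ) * ∏ j, (z - (t j : ℂ)) -
        ∑ k, (s k : ℂ) * ∏ j ∈ Finset.univ.erase k, (z - (t j : ℂ)) := by
    intro z
    rw [hqdef, hPdef]
    simp only [map_sub, _root_.map_mul, map_sum, map_prod, aeval_X, aeval_C,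
      Complex.coe_algebraMap]
  have main : ∀ z : ℂ, (∀ k, z ≠ (t k : ℂ)) →
      (γ : ℂ) + ∑ k, (s k : ℂ) / ((t k : ℂ) - z) =
        (γ : ℂ) * ∏ k, (z - (x k : ℂ)) / (z - (t k : ℂ)) := by
    intro z hz
    have hz' : ∀ k, z - (t k : ℂ) ≠ 0 := fun k => sub_ne_zero.2 (hz k)
    rw [aux_rat (γ : ℂ) (fun k => (t k : ℂ)) (fun k => (s k : ℂ)) z hz']
    rw [show ((γ : ℂ) * ∏ j, (z - (t j : ℂ)) -
        ∑ k, (s k : ℂ) * ∏ j ∈ Finset.univ.erase k, (z - (t j : ℂ))) = (aeval z) q from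
      (haev2 z).symm, haev z, Finset.prod_div_distrib, mul_div_assoc]
  refine ⟨x, hx1, hx2, main, ?_⟩
  intro z hz
  have hz' : ∀ k, z - (t k : ℂ) ≠ 0 := fun k => sub_ne_zero.2 (hz k)
  rw [main z hz]
  constructor
  · intro h0
    have hγ' : (γ : ℂ) ≠ 0 := by exact_mod_cast hγ.ne'
    have hp0 : ∏ k, (z - (x k : ℂ)) / (z - (t k : ℂ)) = 0 := by
      rcases mul_eq_zero.1 h0 with h | h
      · exact absurd h hγ'
      · exact h
    obtain ⟨k, -, hk⟩ := Finset.prod_eq_zero_iff.1 hp0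
    rcases div_eq_zero_iff.1 hk with h | h
    · exact ⟨k, by linear_combination h⟩
    · exact absurd h (hz' k)
  · rintro ⟨k, rfl⟩
    rw [Finset.prod_eq_zero (Finset.mem_univ k) (by simp), mul_zero]
end
end

section
/- Let f(z) = Σ_{j=1}^n σ_j/(t_j − z) with n ≥ 1, σ_j > 0, and 0 ≤ t₁ < t₂ < … < tₙ (i.e. the case γ = 0). Then there exist A > 0 and real numbers x₁,…,x_{n−1} satisfying the interlacing property 0 ≤ t₁ < x₁ < t₂ < … < x_{n−1} < tₙ such that f(z) = (A/(tₙ − z))·Π_{j=1}^{n−1} (z − x_j)/(z − t_j) for all z ∈ ℂ ∖ {t₁,…,tₙ}; in particular f has exactly n−1 distinct real zeros. -/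
open Complex MeasureTheory Polynomial Matrix
open scoped ComplexConjugate

noncomputable section

lemma aux_erase_eq (m : ℕ) (k : Fin (m+1)) :
    Finset.univ.erase k = Finset.Iio k ∪ Finset.Ioi k := by
  ext i
  simp only [Finset.mem_erase, Finset.mem_union, Finset.mem_univ, and_true,
    Finset.mem_Iio, Finset.mem_Ioi, ne_iff_lt_or_gt, gt_iff_lt]

lemma aux_sign (m : ℕ) (t : Fin (m+1) → ℝ) (hmono : StrictMono t) (k : Fin (m+1)) :
    ∃ d : ℝ, 0 < d ∧ ∏ i ∈ Finset.univ.erase k, (t k - t i) = (-1 : ℝ) ^ (m - k.val) * d := by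
  refine ⟨(∏ i ∈ Finset.Iio k, (t k - t i)) * ∏ i ∈ Finset.Ioi k, (t i - t k), ?_, ?_⟩
  · apply mul_pos
    · exact Finset.prod_pos fun i hi => sub_pos.mpr (hmono (Finset.mem_Iio.mp hi))
    · exact Finset.prod_pos fun i hi => sub_pos.mpr (hmono (Finset.mem_Ioi.mp hi))
  · rw [aux_erase_eq, Finset.prod_union]
    · have h2 : ∏ i ∈ Finset.Ioi k, (t k - t i)
          = (-1 : ℝ) ^ (m - k.val) * ∏ i ∈ Finset.Ioi k, (t i - t k) := by
        have : ∀ i ∈ Finset.Ioi k, (t k - t i) = (-1) * (t i - t k) := by intros; ring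
        rw [Finset.prod_congr rfl this, Finset.prod_mul_distrib, Finset.prod_const,
          Fin.card_Ioi, Nat.add_sub_cancel]
      rw [h2]; ring
    · rw [Finset.disjoint_left]
      intro a ha hb
      exact absurd (Finset.mem_Ioi.mp hb) (not_lt.mpr (le_of_lt (Finset.mem_Iio.mp ha)))

lemma aux_eval_Q (m : ℕ) (t s : Fin (m+1) → ℝ) (k : Fin (m+1)) :
    (∑ j, Polynomial.C (s j) * ∏ i ∈ Finset.univ.erase j, (Polynomial.X - Polynomial.C (t i))).eval (t k)
      = s k * ∏ i ∈ Finset.univ.erase k, (t k - t i) := by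
  rw [Polynomial.eval_finset_sum]
  rw [Finset.sum_eq_single k]
  · simp [Polynomial.eval_prod]
  · intro j _ hjk
    have hk : k ∈ Finset.univ.erase j := by simp [Ne.symm hjk]
    simp only [Polynomial.eval_mul, Polynomial.eval_C, Polynomial.eval_prod,
      Polynomial.eval_sub, Polynomial.eval_X]
    rw [Finset.prod_eq_zero hk (by ring)]
    ring
  · simp

lemma aux_roots (m : ℕ) (t s : Fin (m+1) → ℝ) (hmono : StrictMono t) (hs : ∀ k, 0 < s k)
    (j : Fin m) :
    ∃ x ∈ Set.Ioo (t j.castSucc) (t j.succ),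
      (∑ k, Polynomial.C (s k) * ∏ i ∈ Finset.univ.erase k, (Polynomial.X - Polynomial.C (t i))).eval x = 0 := by
  set Q := ∑ k, Polynomial.C (s k) * ∏ i ∈ Finset.univ.erase k, (Polynomial.X - Polynomial.C (t i)) with hQdef
  obtain ⟨d1, hd1, he1⟩ := aux_sign m t hmono j.castSucc
  obtain ⟨d2, hd2, he2⟩ := aux_sign m t hmono j.succ
  have hv1 : Q.eval (t j.castSucc) = (-1 : ℝ) ^ (m - j.val) * (s j.castSucc * d1) := by
    rw [hQdef, aux_eval_Q, he1]; simp [Fin.coe_castSucc]; ring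
  have hv2 : Q.eval (t j.succ) = (-1 : ℝ) ^ (m - j.val - 1) * (s j.succ * d2) := by
    rw [hQdef, aux_eval_Q, he2]; simp [Fin.val_succ]; ring_nf
    congr 2
    omega
  have hab : m - j.val = (m - j.val - 1) + 1 := by omega
  have hle : t j.castSucc ≤ t j.succ := le_of_lt (hmono (Fin.castSucc_lt_succ : j.castSucc < j.succ))
  have hcont : ContinuousOn (fun x => Q.eval x) (Set.Icc (t j.castSucc) (t j.succ)) :=
    (Polynomial.continuous Q).continuousOn
  rcases Nat.even_or_odd (m - j.val - 1) with hpar | hpar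
  · -- (-1)^(m-j-1) = 1, so eval at succ > 0, eval at castSucc < 0
    have h1 : Q.eval (t j.castSucc) < 0 := by
      rw [hv1, hab, pow_succ, hpar.neg_one_pow]
      nlinarith [mul_pos (hs j.castSucc) hd1]
    have h2 : 0 < Q.eval (t j.succ) := by
      rw [hv2, hpar.neg_one_pow]
      nlinarith [mul_pos (hs j.succ) hd2]
    have := intermediate_value_Ioo hle hcont (Set.mem_Ioo.mpr ⟨h1, h2⟩)
    obtain ⟨x, hx, hx0⟩ := this
    exact ⟨x, hx, hx0⟩
  · have h1 : 0 < Q.eval (t j.castSucc) := by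
      rw [hv1, hab, pow_succ, hpar.neg_one_pow]
      nlinarith [mul_pos (hs j.castSucc) hd1]
    have h2 : Q.eval (t j.succ) < 0 := by
      rw [hv2, hpar.neg_one_pow]
      nlinarith [mul_pos (hs j.succ) hd2]
    have := intermediate_value_Ioo' hle hcont (Set.mem_Ioo.mpr ⟨h2, h1⟩)
    obtain ⟨x, hx, hx0⟩ := this
    exact ⟨x, hx, hx0⟩

lemma aux_coeff_top (m : ℕ) {ι : Type*} (u : Finset ι) (a : ι → ℝ) (hcard : u.card = m) :
    (∏ i ∈ u, (Polynomial.X - Polynomial.C (a i))).coeff m = 1 := by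
  have hm : (∏ i ∈ u, (Polynomial.X - Polynomial.C (a i))).Monic :=
    Polynomial.monic_prod_of_monic _ _ fun i _ => Polynomial.monic_X_sub_C (a i)
  have hdeg : (∏ i ∈ u, (Polynomial.X - Polynomial.C (a i))).natDegree = m := by
    rw [Polynomial.natDegree_prod_of_monic _ _ fun i _ => Polynomial.monic_X_sub_C (a i)]
    simp [hcard]
  rw [← hdeg]
  exact hm.coeff_natDegree

lemma aux_poly_id (m : ℕ) (t s : Fin (m+1) → ℝ) (x : Fin m → ℝ)
    (hxinj : Function.Injective x)
    (hroot : ∀ j, (∑ k, Polynomial.C (s k) * ∏ i ∈ Finset.univ.erase k,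
        (Polynomial.X - Polynomial.C (t i))).eval (x j) = 0) :
    (∑ k, Polynomial.C (s k) * ∏ i ∈ Finset.univ.erase k, (Polynomial.X - Polynomial.C (t i)))
      = Polynomial.C (∑ k, s k) * ∏ j, (Polynomial.X - Polynomial.C (x j)) := by
  set Q := ∑ k, Polynomial.C (s k) * ∏ i ∈ Finset.univ.erase k, (Polynomial.X - Polynomial.C (t i)) with hQdef
  set R := Polynomial.C (∑ k, s k) * ∏ j, (Polynomial.X - Polynomial.C (x j)) with hRdef
  have hcardE : ∀ k : Fin (m+1), (Finset.univ.erase k).card = m := by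
    intro k; rw [Finset.card_erase_of_mem (Finset.mem_univ k)]; simp
  have hQdeg : Q.natDegree ≤ m := by
    apply Polynomial.natDegree_sum_le_of_forall_le
    intro k _
    apply le_trans (Polynomial.natDegree_mul_le)
    rw [Polynomial.natDegree_C]
    simp only [zero_add]
    apply le_trans (Polynomial.natDegree_prod_le _ _)
    apply le_trans (Finset.sum_le_card_nsmul _ _ 1 ?_)
    · rw [hcardE k]; simp
    · intro i _; exact Polynomial.natDegree_X_sub_C_le _
  have hRdeg : R.natDegree ≤ m := by
    apply le_trans (Polynomial.natDegree_mul_le)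
    rw [Polynomial.natDegree_C]
    simp only [zero_add]
    apply le_trans (Polynomial.natDegree_prod_le _ _)
    apply le_trans (Finset.sum_le_card_nsmul _ _ 1 ?_)
    · simp
    · intro i _; exact Polynomial.natDegree_X_sub_C_le _
  have hQcoeff : Q.coeff m = ∑ k, s k := by
    rw [hQdef, Polynomial.finset_sum_coeff]
    congr 1; funext k
    rw [Polynomial.coeff_C_mul, aux_coeff_top m _ t (hcardE k), mul_one]
  have hRcoeff : R.coeff m = ∑ k, s k := by
    rw [hRdef, Polynomial.coeff_C_mul, aux_coeff_top m _ x (by simp), mul_one]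
  have hD : Q - R = 0 := by
    by_cases h0 : Q - R = 0
    · exact h0
    · have hdle : (Q - R).natDegree ≤ m := le_trans (Polynomial.natDegree_sub_le Q R) (by simp [hQdeg, hRdeg])
      have hcm : (Q - R).coeff m = 0 := by
        rw [Polynomial.coeff_sub, hQcoeff, hRcoeff, sub_self]
      have hne : (Q - R).natDegree ≠ m := by
        intro he
        exact (Polynomial.leadingCoeff_ne_zero.mpr h0)
          (by rw [Polynomial.leadingCoeff, he]; exact hcm)
      have hlt : (Q - R).natDegree < m := lt_of_le_of_ne hdle hne
      refine Polynomial.eq_zero_of_natDegree_lt_card_of_eval_eq_zero (Q - R) hxinj ?_ ?_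
      · intro j
        rw [Polynomial.eval_sub, hroot j, hRdef]
        simp only [Polynomial.eval_mul, Polynomial.eval_C, Polynomial.eval_prod,
          Polynomial.eval_sub, Polynomial.eval_X]
        rw [Finset.prod_eq_zero (Finset.mem_univ j) (by ring)]
        ring
      · simpa using hlt
  linear_combination (norm := ring_nf) hD

theorem statement13 (m : ℕ) (t s : Fin (m + 1) → ℝ)
    (ht0 : ∀ k, 0 ≤ t k) (hmono : StrictMono t) (hs : ∀ k, 0 < s k) :
    ∃ (A : ℝ) (x : Fin m → ℝ), 0 < A ∧
      (∀ j : Fin m, t j.castSucc < x j ∧ x j < t j.succ) ∧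
      (∀ z : ℂ, (∀ k, z ≠ (t k : ℂ)) →
        ∑ k, (s k : ℂ) / ((t k : ℂ) - z) =
          ((A : ℂ) / ((t (Fin.last m) : ℂ) - z)) *
            ∏ j : Fin m, (z - (x j : ℂ)) / (z - (t j.castSucc : ℂ))) ∧
      (∀ z : ℂ, (∀ k, z ≠ (t k : ℂ)) →
        (∑ k, (s k : ℂ) / ((t k : ℂ) - z) = 0 ↔ ∃ j, z = (x j : ℂ))) := by
  classical
  choose x hx1 hx2 using fun j => aux_roots m t s hmono hs j
  have hinter : ∀ j : Fin m, t j.castSucc < x j ∧ x j < t j.succ :=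
    fun j => ⟨(hx1 j).1, (hx1 j).2⟩
  have hxmono : StrictMono x := by
    intro i j hij
    have hij' : (i : ℕ) < (j : ℕ) := hij
    calc x i < t i.succ := (hinter i).2
      _ ≤ t j.castSucc := hmono.monotone (by rw [Fin.le_def]; simp; omega)
      _ < x j := (hinter j).1
  have hA : 0 < ∑ k, s k := Finset.sum_pos (fun k _ => hs k) ⟨0, Finset.mem_univ 0⟩
  have hid := aux_poly_id m t s x hxmono.injective hx2
  refine ⟨∑ k, s k, x, hA, hinter, ?_, ?_⟩ <;> intro z hz <;>
  · have hzk : ∀ k : Fin (m+1), (z - (t k : ℂ)) ≠ 0 := fun k => sub_ne_zero.mpr (hz k)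
    have hPne : (∏ i, (z - (t i : ℂ))) ≠ 0 :=
      Finset.prod_ne_zero_iff.mpr fun i _ => hzk i
    have hCid := congrArg (Polynomial.aeval z) hid
    simp only [_root_.map_sum, _root_.map_mul, _root_.map_prod, map_sub, Polynomial.aeval_X,
      Polynomial.aeval_C, Complex.coe_algebraMap] at hCid
    have hterm : ∀ k : Fin (m+1), (s k : ℂ) / ((t k : ℂ) - z) =
        -((s k : ℂ) * ∏ i ∈ Finset.univ.erase k, (z - (t i : ℂ))) / ∏ i, (z - (t i : ℂ)) := by
      intro k
      rw [← Finset.mul_prod_erase Finset.univ _ (Finset.mem_univ k)]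
      have h1 : ((t k : ℂ) - z) ≠ 0 := sub_ne_zero.mpr (Ne.symm (hz k))
      have h2 : (∏ i ∈ Finset.univ.erase k, (z - (t i : ℂ))) ≠ 0 :=
        Finset.prod_ne_zero_iff.mpr fun i _ => hzk i
      rw [eq_div_iff (mul_ne_zero (hzk k) h2), div_mul_eq_mul_div, mul_comm (z - (t k : ℂ)),
        ← mul_assoc, mul_comm _ (z - (t k : ℂ)), div_eq_iff h1]
      ring
    have hsum : ∑ k, (s k : ℂ) / ((t k : ℂ) - z) =
        -((∑ k, (s k : ℂ)) * ∏ j, (z - (x j : ℂ))) / ∏ i, (z - (t i : ℂ)) := by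
      rw [Finset.sum_congr rfl fun k _ => hterm k, ← Finset.sum_div, ← hCid]
      congr 1
      simp
    rw [hsum]
    first
    | · -- goal 1
        rw [Fin.prod_univ_castSucc (f := fun i : Fin (m+1) => z - (t i : ℂ)),
          Finset.prod_div_distrib]
        have h1 : (z - (t (Fin.last m) : ℂ)) ≠ 0 := hzk _
        have h2 : (∏ j : Fin m, (z - (t j.castSucc : ℂ))) ≠ 0 :=
          Finset.prod_ne_zero_iff.mpr fun j _ => hzk _
        have h3 : ((t (Fin.last m) : ℂ) - z) ≠ 0 := sub_ne_zero.mpr (Ne.symm (hz _))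
        push_cast
        field_simp
        ring
    | · -- goal 2
        rw [_root_.div_eq_zero_iff]
        have hAne : (∑ k, (s k : ℂ)) ≠ 0 := by
          have h4 : ((∑ k, s k : ℝ) : ℂ) ≠ 0 := Complex.ofReal_ne_zero.mpr (ne_of_gt hA)
          push_cast at h4; exact h4
        simp [hPne, hAne, Finset.prod_eq_zero_iff, sub_eq_zero]
end
end

section
/- Let z₁,…,zₙ ∈ ℍ₊, let f have a Stieltjes spectral representation with constant γ ≥ 0 and measure σ, set w_j = f(z_j) and ‖σ‖ = ∫_{[0,∞)} (1+t)⁻¹ dσ(t). For ξ ∈ ℂⁿ put S = Σ_{k=1}^n ξ_k and θ(t) = Re Σ_{k=1}^n ξ_k·(conj(z_k) + 1)/(t − conj(z_k)) for t ≥ 0, with derivative θ'(t) = −Re Σ_{k=1}^n ξ_k·(conj(z_k) + 1)/(t − conj(z_k))². Then |Re Σ_{j=1}^n w_j·conj(ξ_j)|² ≤ 2·(γ + ‖σ‖)²·( (Re S)² + ∫₀^∞ θ(t)² dt + ∫₀^∞ θ'(t)² dt ). -/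
open Complex MeasureTheory Polynomial Matrix
open Set Filter
open scoped ComplexConjugate

noncomputable section

/-- `f` has a Stieltjes spectral representation with constant `γ ≥ 0` and positive Borel
measure `σ` supported on `[0,∞)` with `∫ (1+t)⁻¹ dσ < ∞`. -/
def IsStieltjesRep (f : ℂ → ℂ) (γ : ℝ) (σ : Measure ℝ) : Prop :=
  0 ≤ γ ∧ σ (Set.Iio 0) = 0 ∧
  (∫⁻ t, ENNReal.ofReal ((1 + t)⁻¹) ∂σ) < ⊤ ∧
  ∀ z ∈ SDom, f z = (γ : ℂ) + ∫ t, ((t : ℂ) - z)⁻¹ ∂σ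

/-- `‖σ‖ = ∫ (1+t)⁻¹ dσ(t)` as a real number. -/
def stieltjesTotal (σ : Measure ℝ) : ℝ :=
  (∫⁻ t, ENNReal.ofReal ((1 + t)⁻¹) ∂σ).toReal


section AuxLemmas


lemma aux_ne (a : ℂ) (ha : a.im ≠ 0) (t : ℝ) : (t:ℂ) - a ≠ 0 := by
  intro h
  have : ((t:ℂ) - a).im = 0 := by rw [h]; simp
  simp [Complex.sub_im] at this
  exact ha this

lemma aux_bound (a : ℂ) (ha : a.im ≠ 0) :
    ∃ C, 0 < C ∧ ∀ t : ℝ, 0 ≤ t → 1 + t ≤ C * ‖(t:ℂ) - a‖ := by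
  refine ⟨max 2 ((2 + 2*‖a‖)/|a.im|), lt_of_lt_of_le two_pos (le_max_left _ _), fun t ht => ?_⟩
  have him : |a.im| ≤ ‖(t:ℂ) - a‖ := by
    have := Complex.abs_im_le_norm ((t:ℂ) - a)
    simpa [Complex.sub_im] using this
  have haim : 0 < |a.im| := abs_pos.mpr ha
  rcases le_or_gt t (1 + 2*‖a‖) with h | h
  · have h1 : 1 + t ≤ 2 + 2*‖a‖ := by linarith
    have h2 : 2 + 2*‖a‖ ≤ ((2 + 2*‖a‖)/|a.im|) * ‖(t:ℂ) - a‖ := by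
      rw [div_mul_eq_mul_div, le_div_iff₀ haim]
      have hna : (0:ℝ) ≤ 2 + 2*‖a‖ := by positivity
      calc (2 + 2*‖a‖) * |a.im| ≤ (2 + 2*‖a‖) * ‖(t:ℂ) - a‖ := by
            exact mul_le_mul_of_nonneg_left him hna
        _ = _ := by ring
    calc 1 + t ≤ 2 + 2*‖a‖ := h1
      _ ≤ ((2 + 2*‖a‖)/|a.im|) * ‖(t:ℂ) - a‖ := h2
      _ ≤ max 2 ((2 + 2*‖a‖)/|a.im|) * ‖(t:ℂ) - a‖ := by
          exact mul_le_mul_of_nonneg_right (le_max_right _ _) (norm_nonneg _)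
  · have hre : t - ‖a‖ ≤ ‖(t:ℂ) - a‖ := by
      have h1 := Complex.abs_re_le_norm ((t:ℂ) - a)
      have h2 : |a.re| ≤ ‖a‖ := Complex.abs_re_le_norm a
      have : t - a.re ≤ |t - a.re| := le_abs_self _
      simp only [Complex.sub_re, Complex.ofReal_re] at h1
      have h3 : ‖(t:ℂ) - a‖ = ‖(t:ℂ) - a‖ := rfl
      have h4 := (abs_le.mp h2).2
      linarith
    have h1 : 1 + t ≤ 2 * (t - ‖a‖) := by linarith
    calc 1 + t ≤ 2 * (t - ‖a‖) := h1
      _ ≤ 2 * ‖(t:ℂ) - a‖ := by linarith [hre]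
      _ ≤ max 2 ((2 + 2*‖a‖)/|a.im|) * ‖(t:ℂ) - a‖ :=
          mul_le_mul_of_nonneg_right (le_max_left _ _) (norm_nonneg _)

lemma aux_ne' (a : ℂ) (ha : a.im ≠ 0) (t : ℝ) : (t:ℂ) - a ≠ 0 := by
  intro h
  have : ((t:ℂ) - a).im = 0 := by rw [h]; simp
  simp [Complex.sub_im] at this
  exact ha this

-- derivative lemma
lemma aux_deriv {n : ℕ} (a c : Fin n → ℂ) (ha : ∀ k, (a k).im ≠ 0) (t : ℝ) :
    HasDerivAt (fun t : ℝ => (∑ k, c k / ((t:ℂ) - a k)).re)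
      (-(∑ k, c k / ((t:ℂ) - a k) ^ 2).re) t := by
  have hterm : ∀ k : Fin n, HasDerivAt (fun w : ℂ => c k / (w - a k))
      (c k * (-1 / ((t:ℂ) - a k) ^ 2)) (t:ℂ) := by
    intro k
    have h1 : HasDerivAt (fun w : ℂ => (w - a k)⁻¹) (-1 / ((t:ℂ) - a k) ^ 2) (t:ℂ) := by
      have := ((hasDerivAt_id ((t:ℂ))).sub_const (a k)).fun_inv (aux_ne' (a k) (ha k) t)
      simpa using this
    simpa [div_eq_mul_inv] using h1.const_mul (c k)
  have hsum : HasDerivAt (fun w : ℂ => ∑ k, c k / (w - a k))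
      (∑ k, c k * (-1 / ((t:ℂ) - a k) ^ 2)) (t:ℂ) := HasDerivAt.fun_sum fun k _ => hterm k
  have hreal : HasDerivAt (fun t : ℝ => ∑ k, c k / ((t:ℂ) - a k))
      (∑ k, c k * (-1 / ((t:ℂ) - a k) ^ 2)) t := hsum.comp_ofReal
  have hre := Complex.reCLM.hasFDerivAt.comp_hasDerivAt t hreal
  refine hre.congr_deriv ?_
  have hs : (∑ k, c k * (-1 / ((t:ℂ) - a k) ^ 2)) = -(∑ k, c k / ((t:ℂ) - a k) ^ 2) := by
    rw [← Finset.sum_neg_distrib]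
    exact Finset.sum_congr rfl fun k _ => by ring
  rw [hs]; simp

-- bound lemma assuming per-point bounds already chosen
lemma aux_bound' (a : ℂ) (ha : a.im ≠ 0) :
    ∃ C, 0 < C ∧ ∀ t : ℝ, 0 ≤ t → ‖((t:ℂ) - a)⁻¹‖ ≤ C * (1 + t)⁻¹ := by
  obtain ⟨C, hCpos, hC⟩ := aux_bound a ha
  refine ⟨C, hCpos, fun t ht => ?_⟩
  have hpos : 0 < ‖(t:ℂ) - a‖ := norm_pos_iff.mpr (aux_ne' a ha t)
  have h1t : (0:ℝ) < 1 + t := by linarith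
  have h2 : 1/‖(t:ℂ) - a‖ ≤ C/(1+t) := by
    rw [div_le_div_iff₀ hpos h1t]; nlinarith [hC t ht]
  calc ‖((t:ℂ) - a)⁻¹‖ = 1/‖(t:ℂ) - a‖ := by rw [norm_inv, one_div]
    _ ≤ C/(1+t) := h2
    _ = C * (1+t)⁻¹ := by rw [div_eq_mul_inv]

lemma aux_sum_bound {n : ℕ} (a c : Fin n → ℂ) (ha : ∀ k, (a k).im ≠ 0) :
    ∃ K, 0 ≤ K ∧ ∀ t : ℝ, 0 ≤ t →
      ‖∑ k, c k / ((t:ℂ) - a k)‖ ≤ K * (1 + t)⁻¹ ∧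
      ‖∑ k, c k / ((t:ℂ) - a k) ^ 2‖ ≤ K * ((1 + t)⁻¹) ^ 2 := by
  choose C hCpos hC using fun k => aux_bound' (a k) (ha k)
  refine ⟨∑ k, ‖c k‖ * (C k + C k ^ 2), Finset.sum_nonneg fun k _ => mul_nonneg (norm_nonneg _) (by nlinarith [hCpos k]), fun t ht => ?_⟩
  have h1t : (0:ℝ) < 1 + t := by linarith
  have hinv : (0:ℝ) ≤ (1+t)⁻¹ := by positivity
  constructor
  · calc ‖∑ k, c k / ((t:ℂ) - a k)‖ ≤ ∑ k, ‖c k / ((t:ℂ) - a k)‖ := norm_sum_le _ _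
      _ ≤ ∑ k, (‖c k‖ * (C k + C k ^ 2)) * (1+t)⁻¹ := by
          refine Finset.sum_le_sum fun k _ => ?_
          rw [norm_div]
          have h2 : ‖((t:ℂ) - a k)‖⁻¹ ≤ C k * (1+t)⁻¹ := by
            simpa [norm_inv] using hC k t ht
          calc ‖c k‖ / ‖(t:ℂ) - a k‖ = ‖c k‖ * ‖((t:ℂ) - a k)‖⁻¹ := by rw [div_eq_mul_inv]
            _ ≤ ‖c k‖ * (C k * (1+t)⁻¹) := by
                exact mul_le_mul_of_nonneg_left h2 (norm_nonneg _)
            _ ≤ (‖c k‖ * (C k + C k ^ 2)) * (1+t)⁻¹ := by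
                have : C k ≤ C k + C k ^ 2 := by nlinarith [hCpos k]
                have := mul_le_mul_of_nonneg_left this (norm_nonneg (c k))
                nlinarith [norm_nonneg (c k), hinv]
      _ = (∑ k, ‖c k‖ * (C k + C k ^ 2)) * (1+t)⁻¹ := by rw [Finset.sum_mul]
  · calc ‖∑ k, c k / ((t:ℂ) - a k) ^ 2‖ ≤ ∑ k, ‖c k / ((t:ℂ) - a k) ^ 2‖ := norm_sum_le _ _
      _ ≤ ∑ k, (‖c k‖ * (C k + C k ^ 2)) * ((1+t)⁻¹) ^ 2 := by
          refine Finset.sum_le_sum fun k _ => ?_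
          rw [norm_div, norm_pow]
          have h2 : ‖((t:ℂ) - a k)‖⁻¹ ≤ C k * (1+t)⁻¹ := by
            simpa [norm_inv] using hC k t ht
          have h3 : (‖((t:ℂ) - a k)‖ ^ 2)⁻¹ ≤ (C k * (1+t)⁻¹) ^ 2 := by
            rw [← inv_pow]
            exact pow_le_pow_left₀ (by positivity) h2 2
          calc ‖c k‖ / ‖(t:ℂ) - a k‖ ^ 2 = ‖c k‖ * (‖(t:ℂ) - a k‖ ^ 2)⁻¹ := by
                rw [div_eq_mul_inv]
            _ ≤ ‖c k‖ * (C k * (1+t)⁻¹) ^ 2 := mul_le_mul_of_nonneg_left h3 (norm_nonneg _)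
            _ ≤ (‖c k‖ * (C k + C k ^ 2)) * ((1+t)⁻¹) ^ 2 := by
                have h4 : C k ^ 2 ≤ C k + C k ^ 2 := by nlinarith [hCpos k]
                nlinarith [norm_nonneg (c k), hinv, sq_nonneg ((1+t)⁻¹), hCpos k]
      _ = _ := by rw [Finset.sum_mul]


lemma aux_sobolev (θ θ' : ℝ → ℝ) (hd : ∀ t, HasDerivAt θ (θ' t) t)
    (hm' : Measurable θ')
    (h2 : IntegrableOn (fun t => θ t ^ 2) (Ioi 0))
    (h2' : IntegrableOn (fun t => θ' t ^ 2) (Ioi 0))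
    (h0 : Tendsto θ atTop (nhds 0)) (t : ℝ) (ht : 0 ≤ t) :
    θ t ^ 2 ≤ (∫ s in Ioi 0, θ s ^ 2) + ∫ s in Ioi 0, θ' s ^ 2 := by
  have hcont : Continuous θ := by
    rw [continuous_iff_continuousAt]; exact fun x => (hd x).continuousAt
  have hsum : IntegrableOn (fun s => θ s ^ 2 + θ' s ^ 2) (Ioi 0) := h2.add h2'
  have hsub : IntegrableOn (fun s => θ s ^ 2 + θ' s ^ 2) (Ioi t) :=
    hsum.mono_set (Ioi_subset_Ioi ht)
  have hf'int : IntegrableOn (fun s => 2 * θ s * θ' s) (Ioi t) := by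
    refine hsub.mono' ?_ ?_
    · exact (((measurable_const.mul hcont.measurable).mul hm')).aestronglyMeasurable
    · filter_upwards with s
      have h1 : 2 * |θ s| * |θ' s| ≤ |θ s| ^ 2 + |θ' s| ^ 2 := two_mul_le_add_sq _ _
      have : ‖2 * θ s * θ' s‖ = 2 * |θ s| * |θ' s| := by
        rw [Real.norm_eq_abs, abs_mul, abs_mul]; norm_num
      rw [this]
      calc 2 * |θ s| * |θ' s| ≤ |θ s| ^ 2 + |θ' s| ^ 2 := h1
        _ = θ s ^ 2 + θ' s ^ 2 := by rw [_root_.sq_abs, _root_.sq_abs]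
  have hFTC : ∫ s in Ioi t, 2 * θ s * θ' s = 0 - θ t ^ 2 := by
    refine integral_Ioi_of_hasDerivAt_of_tendsto' (f := fun s => θ s ^ 2)
      (m := 0) (fun x _ => ?_) hf'int ?_
    · simpa [mul_comm, mul_assoc, mul_left_comm] using (hd x).fun_pow 2
    · simpa using h0.pow 2
  have key : θ t ^ 2 = ∫ s in Ioi t, -(2 * θ s * θ' s) := by
    rw [integral_neg, hFTC]; ring
  rw [key]
  calc ∫ s in Ioi t, -(2 * θ s * θ' s)
      ≤ ∫ s in Ioi t, (θ s ^ 2 + θ' s ^ 2) := by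
        refine integral_mono hf'int.neg hsub fun s => ?_
        have := two_mul_le_add_sq (-(θ s)) (θ' s)
        nlinarith [this]
    _ ≤ ∫ s in Ioi 0, (θ s ^ 2 + θ' s ^ 2) := by
        refine setIntegral_mono_set hsum ?_ (HasSubset.Subset.eventuallyLE (Ioi_subset_Ioi ht))
        filter_upwards with s; positivity
    _ = _ := integral_add h2 h2'

end AuxLemmas

theorem statement15 (n : ℕ) (z : Fin n → ℂ) (hz : ∀ j, 0 < (z j).im)
    (f : ℂ → ℂ) (γ : ℝ) (σ : Measure ℝ) (hrep : IsStieltjesRep f γ σ)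
    (ξ : Fin n → ℂ) :
    |(∑ j, f (z j) * conj (ξ j)).re| ^ 2 ≤
      2 * (γ + stieltjesTotal σ) ^ 2 *
        ((∑ k, ξ k).re ^ 2 +
          (∫ t in Set.Ioi (0 : ℝ),
            ((∑ k, ξ k * (conj (z k) + 1) / ((t : ℂ) - conj (z k))).re) ^ 2) +
          (∫ t in Set.Ioi (0 : ℝ),
            (-(∑ k, ξ k * (conj (z k) + 1) / ((t : ℂ) - conj (z k)) ^ 2).re) ^ 2)) := by
  obtain ⟨hγ, hσ0, hfin, hf⟩ := hrep
  -- basic notation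
  set a : Fin n → ℂ := fun k => conj (z k) with ha_def
  set c : Fin n → ℂ := fun k => ξ k * (conj (z k) + 1) with hc_def
  have ha : ∀ k, (a k).im ≠ 0 := fun k => by
    simp only [ha_def, Complex.conj_im]
    exact neg_ne_zero.mpr (hz k).ne'
  have hzim : ∀ j, (z j).im ≠ 0 := fun j => (hz j).ne'
  set θ : ℝ → ℝ := fun t => (∑ k, c k / ((t:ℂ) - a k)).re with hθ_def
  set θ' : ℝ → ℝ := fun t => -(∑ k, c k / ((t:ℂ) - a k) ^ 2).re with hθ'_def
  set Sre : ℝ := (∑ k, ξ k).re with hSre_def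
  set A : ℝ := ∫ t in Set.Ioi (0:ℝ), θ t ^ 2 with hA_def
  set B : ℝ := ∫ t in Set.Ioi (0:ℝ), θ' t ^ 2 with hB_def
  -- goal rewriting
  show |(∑ j, f (z j) * conj (ξ j)).re| ^ 2 ≤
      2 * (γ + stieltjesTotal σ) ^ 2 * (Sre ^ 2 + A + B)
  -- derivative
  have hθd : ∀ t, HasDerivAt θ (θ' t) t := aux_deriv a c ha
  have hθcont : Continuous θ := by
    rw [continuous_iff_continuousAt]; exact fun x => (hθd x).continuousAt
  have hθ'cont : Continuous θ' := by
    refine Continuous.neg ?_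
    refine Complex.continuous_re.comp (continuous_finset_sum _ fun k _ => ?_)
    exact continuous_const.div ((Complex.continuous_ofReal.sub continuous_const).pow 2)
      (fun t => pow_ne_zero 2 (aux_ne' (a k) (ha k) t))
  -- decay bounds
  obtain ⟨K, hK0, hK⟩ := aux_sum_bound a c ha
  have hθb : ∀ t : ℝ, 0 ≤ t → |θ t| ≤ K * (1+t)⁻¹ := fun t ht =>
    (Complex.abs_re_le_norm _).trans (hK t ht).1
  have hθ'b : ∀ t : ℝ, 0 ≤ t → |θ' t| ≤ K * ((1+t)⁻¹) ^ 2 := fun t ht => by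
    rw [hθ'_def, abs_neg]
    exact (Complex.abs_re_le_norm _).trans (hK t ht).2
  -- L² integrability
  have hbase : IntegrableOn (fun t : ℝ => K^2 * (1 + t^2)⁻¹) (Ioi 0) :=
    (integrable_inv_one_add_sq.const_mul (K^2)).integrableOn
  have hsq_ineq : ∀ t : ℝ, 0 ≤ t → (K * (1+t)⁻¹)^2 ≤ K^2 * (1+t^2)⁻¹ := by
    intro t ht
    have h1 : (0:ℝ) < 1 + t := by linarith
    have h2 : (1:ℝ) + t^2 ≤ (1+t)^2 := by nlinarith
    have h3 : ((1+t)^2)⁻¹ ≤ (1+t^2)⁻¹ := by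
      apply inv_anti₀ (by positivity) h2
    calc (K * (1+t)⁻¹)^2 = K^2 * ((1+t)^2)⁻¹ := by rw [mul_pow, inv_pow]
      _ ≤ K^2 * (1+t^2)⁻¹ := mul_le_mul_of_nonneg_left h3 (by positivity)
  have hθ2 : IntegrableOn (fun t => θ t ^ 2) (Ioi 0) := by
    refine hbase.mono' (hθcont.pow 2).aestronglyMeasurable ?_
    rw [ae_restrict_iff' measurableSet_Ioi]
    filter_upwards with t ht
    have ht' : (0:ℝ) ≤ t := le_of_lt ht
    have h1 : |θ t| ≤ K * (1+t)⁻¹ := hθb t ht'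
    have : θ t ^ 2 ≤ (K * (1+t)⁻¹)^2 := by
      rw [← _root_.sq_abs]
      exact pow_le_pow_left₀ (abs_nonneg _) h1 2
    rw [Real.norm_eq_abs, _root_.abs_of_nonneg (sq_nonneg _)]
    exact this.trans (hsq_ineq t ht')
  have hθ'2 : IntegrableOn (fun t => θ' t ^ 2) (Ioi 0) := by
    refine hbase.mono' (hθ'cont.pow 2).aestronglyMeasurable ?_
    rw [ae_restrict_iff' measurableSet_Ioi]
    filter_upwards with t ht
    have ht' : (0:ℝ) ≤ t := le_of_lt ht
    have hinv : (0:ℝ) < (1+t)⁻¹ := by positivity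
    have hinv1 : (1+t)⁻¹ ≤ 1 := by
      rw [inv_le_one_iff₀]; right; linarith
    have h1 : |θ' t| ≤ K * ((1+t)⁻¹)^2 := hθ'b t ht'
    have h2 : K * ((1+t)⁻¹)^2 ≤ K * (1+t)⁻¹ := by nlinarith [mul_le_mul_of_nonneg_left hinv1 (mul_nonneg hK0 hinv.le)]
    have : θ' t ^ 2 ≤ (K * (1+t)⁻¹)^2 := by
      rw [← _root_.sq_abs]
      exact pow_le_pow_left₀ (abs_nonneg _) (h1.trans h2) 2
    rw [Real.norm_eq_abs, _root_.abs_of_nonneg (sq_nonneg _)]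
    exact this.trans (hsq_ineq t ht')
  -- θ → 0 at infinity
  have hθ0 : Tendsto θ atTop (nhds 0) := by
    have hg : Tendsto (fun t : ℝ => K * (1+t)⁻¹) atTop (nhds 0) := by
      have h1 : Tendsto (fun t : ℝ => (1+t)⁻¹) atTop (nhds 0) :=
        tendsto_inv_atTop_zero.comp (tendsto_atTop_add_const_left _ 1 tendsto_id)
      simpa using h1.const_mul K
    refine tendsto_of_tendsto_of_tendsto_of_le_of_le' (f := θ) (hg := by simpa using hg.neg) (hh := hg) ?_ ?_
    · filter_upwards [eventually_ge_atTop (0:ℝ)] with t ht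
      have := hθb t ht; rw [abs_le] at this; simpa using this.1
    · filter_upwards [eventually_ge_atTop (0:ℝ)] with t ht
      have := hθb t ht; rw [abs_le] at this; exact this.2
  -- Sobolev bound
  have hsob : ∀ t : ℝ, 0 ≤ t → θ t ^ 2 ≤ A + B := fun t ht =>
    aux_sobolev θ θ' hθd hθ'cont.measurable hθ2 hθ'2 hθ0 t ht
  -- σ-side
  have hae : ∀ᵐ t ∂σ, 0 ≤ t := by
    rw [ae_iff]
    convert hσ0 using 2
    ext t; simp [Set.mem_Iio, not_le]
  have hIntBase : Integrable (fun t : ℝ => (1+t)⁻¹) σ := by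
    constructor
    · exact ((measurable_const.add measurable_id).inv).aestronglyMeasurable
    · show (∫⁻ t, (‖(1+t)⁻¹‖₊ : ENNReal) ∂σ) < ⊤
      calc ∫⁻ t, (‖(1+t)⁻¹‖₊ : ENNReal) ∂σ
          = ∫⁻ t, ENNReal.ofReal ((1+t)⁻¹) ∂σ := by
            refine lintegral_congr_ae ?_
            filter_upwards [hae] with t ht
            exact Real.enorm_eq_ofReal (by positivity)
        _ < ⊤ := hfin
  have hIntj : ∀ j, Integrable (fun t : ℝ => ((t:ℂ) - z j)⁻¹) σ := by
    intro j
    obtain ⟨C, hC0, hC⟩ := aux_bound' (z j) (hzim j)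
    refine ((hIntBase.const_mul C).mono' ?_ ?_)
    · exact ((Complex.continuous_ofReal.sub continuous_const).inv₀
        (fun t => aux_ne' (z j) (hzim j) t)).aestronglyMeasurable
    · filter_upwards [hae] with t ht
      simpa using hC t ht
  set G : ℝ → ℂ := fun t => ∑ j, conj (ξ j) * ((t:ℂ) - z j)⁻¹ with hG_def
  have hIntG : Integrable G σ :=
    integrable_finset_sum _ fun j _ => (hIntj j).const_mul _
  set H : ℝ → ℝ := fun t => (G t).re with hH_def
  have hIntH : Integrable H σ := hIntG.re
  -- main identity
  have hSDom : ∀ j, z j ∈ SDom := fun j => by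
    intro hmem
    exact (hz j).ne' hmem.2
  have hkey : (∑ j, f (z j) * conj (ξ j)).re = γ * Sre + ∫ t, H t ∂σ := by
    have h1 : ∑ j, f (z j) * conj (ξ j)
        = (γ:ℂ) * conj (∑ k, ξ k) + ∫ t, G t ∂σ := by
      have h2 : ∀ j, f (z j) * conj (ξ j)
          = (γ:ℂ) * conj (ξ j) + conj (ξ j) * ∫ t, ((t:ℂ) - z j)⁻¹ ∂σ := by
        intro j
        rw [hf (z j) (hSDom j)]; ring
      rw [Finset.sum_congr rfl fun j _ => h2 j, Finset.sum_add_distrib]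
      congr 1
      · rw [← Finset.mul_sum, map_sum]
      · rw [integral_finset_sum _ fun j _ => (hIntj j).const_mul _]
        exact Finset.sum_congr rfl fun j _ => (integral_const_mul _ _).symm
    rw [h1]
    rw [Complex.add_re]
    congr 1
    · rw [Complex.mul_re, Complex.ofReal_re, Complex.ofReal_im, Complex.conj_re, hSre_def]
      ring
    · exact (integral_re hIntG).symm
  -- pointwise identity for H
  have hHid : ∀ t : ℝ, 0 ≤ t → H t = (θ t + Sre) * (1+t)⁻¹ := by
    intro t ht
    have h1t : (0:ℝ) < 1 + t := by linarith
    have h1tC : ((1:ℂ) + (t:ℂ)) ≠ 0 := by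
      intro h
      have : ((1:ℂ) + (t:ℂ)).re = 0 := by rw [h]; simp
      simp at this; linarith
    have hterm : ∀ j, ((1:ℂ) + (t:ℂ)) * (conj (ξ j) * ((t:ℂ) - z j)⁻¹)
        = conj (c j / ((t:ℂ) - a j)) + conj (ξ j) := by
      intro j
      have hne : (t:ℂ) - z j ≠ 0 := aux_ne' (z j) (hzim j) t
      rw [hc_def, ha_def]
      simp only
      simp only [map_div₀, _root_.map_mul, _root_.map_add, map_sub, Complex.conj_conj, Complex.conj_ofReal, _root_.map_one]
      field_simp
      ring
    have hGid : ((1:ℂ) + (t:ℂ)) * G t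
        = conj (∑ k, c k / ((t:ℂ) - a k)) + conj (∑ k, ξ k) := by
      rw [hG_def]
      simp only
      rw [Finset.mul_sum, Finset.sum_congr rfl fun j _ => hterm j, Finset.sum_add_distrib,
        map_sum, map_sum]
    have hre : (1 + t) * H t = θ t + Sre := by
      have := congrArg Complex.re hGid
      rwa [Complex.add_re, Complex.conj_re, Complex.conj_re, Complex.mul_re,
        Complex.add_re, Complex.add_im, Complex.one_re, Complex.one_im,
        Complex.ofReal_re, Complex.ofReal_im, add_zero, zero_mul, sub_zero] at this
    field_simp
    linarith [hre]
  -- the constant M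
  have hA0 : 0 ≤ A := setIntegral_nonneg measurableSet_Ioi fun t _ => sq_nonneg _
  have hB0 : 0 ≤ B := setIntegral_nonneg measurableSet_Ioi fun t _ => sq_nonneg _
  set M : ℝ := Real.sqrt (2 * (Sre^2 + A + B)) with hM_def
  have hM0 : 0 ≤ M := Real.sqrt_nonneg _
  have hM2 : M^2 = 2 * (Sre^2 + A + B) := Real.sq_sqrt (by positivity)
  have hSreM : |Sre| ≤ M := by
    have h1 : Sre^2 ≤ M^2 := by rw [hM2]; nlinarith
    have := Real.sqrt_le_sqrt h1
    rwa [Real.sqrt_sq_eq_abs, Real.sqrt_sq hM0] at this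
  have hHM : ∀ t : ℝ, 0 ≤ t → |H t| ≤ M * (1+t)⁻¹ := by
    intro t ht
    have h1t : (0:ℝ) < 1 + t := by linarith
    have h1 : (θ t + Sre)^2 ≤ M^2 := by
      rw [hM2]
      have := hsob t ht
      nlinarith [sq_nonneg (θ t - Sre)]
    have h2 : |θ t + Sre| ≤ M := by
      have := Real.sqrt_le_sqrt h1
      rwa [Real.sqrt_sq_eq_abs, Real.sqrt_sq hM0] at this
    rw [hHid t ht, abs_mul, _root_.abs_of_nonneg (by positivity : (0:ℝ) ≤ (1+t)⁻¹)]
    exact mul_le_mul_of_nonneg_right h2 (by positivity)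
  -- total mass
  have hTot : ∫ t, (1+t)⁻¹ ∂σ = stieltjesTotal σ := by
    rw [stieltjesTotal, integral_eq_lintegral_of_nonneg_ae
      (by filter_upwards [hae] with t ht; positivity) hIntBase.aestronglyMeasurable]
  have hTot0 : 0 ≤ stieltjesTotal σ := ENNReal.toReal_nonneg
  -- the integral bound
  have hIntBound : |∫ t, H t ∂σ| ≤ M * stieltjesTotal σ := by
    calc |∫ t, H t ∂σ| ≤ ∫ t, |H t| ∂σ := by
          simpa [Real.norm_eq_abs] using norm_integral_le_integral_norm (μ := σ) H
      _ ≤ ∫ t, M * (1+t)⁻¹ ∂σ := by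
          refine integral_mono_ae hIntH.abs (hIntBase.const_mul M) ?_
          filter_upwards [hae] with t ht
          exact hHM t ht
      _ = M * ∫ t, (1+t)⁻¹ ∂σ := integral_const_mul _ _
      _ = M * stieltjesTotal σ := by rw [hTot]
  -- final
  have hLHS : |(∑ j, f (z j) * conj (ξ j)).re| ≤ (γ + stieltjesTotal σ) * M := by
    rw [hkey]
    calc |γ * Sre + ∫ t, H t ∂σ| ≤ |γ * Sre| + |∫ t, H t ∂σ| := abs_add_le _ _
      _ = γ * |Sre| + |∫ t, H t ∂σ| := by rw [abs_mul, _root_.abs_of_nonneg hγ]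
      _ ≤ γ * M + M * stieltjesTotal σ :=
          add_le_add (mul_le_mul_of_nonneg_left hSreM hγ) hIntBound
      _ = (γ + stieltjesTotal σ) * M := by ring
  calc |(∑ j, f (z j) * conj (ξ j)).re| ^ 2
      ≤ ((γ + stieltjesTotal σ) * M) ^ 2 := pow_le_pow_left₀ (abs_nonneg _) hLHS 2
    _ = (γ + stieltjesTotal σ)^2 * M^2 := by ring
    _ = 2 * (γ + stieltjesTotal σ) ^ 2 * (Sre ^ 2 + A + B) := by rw [hM2]; ring
end
end

section
/- Let z₁,…,zₙ ∈ ℍ₊ and δ₁,…,δₙ ∈ ℂ satisfy Re Σ_{j=1}^n δ_j = 0 and R := Re Σ_{j=1}^n δ_j·conj(z_j) ≠ 0. Define, for real t larger than max_j |z_j|, C'(t) = −Re Σ_{j=1}^n δ_j/(t − conj(z_j))² (the derivative of the Caprini function C(t) = Re Σ_j δ_j/(t − conj(z_j))), and D_∞(t) = −2R/t³. Set M₀ = 2·(Σ_{j=1}^n |δ_j|·|z_j|)/|R| and T = (M₀ + 1)·max_{1≤j≤n} |z_j|. Then for every t > T one has |C'(t) − D_∞(t)| < |D_∞(t)|; in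 particular C'(t) ≠ 0 for all t > T. -/
open Complex MeasureTheory Polynomial Matrix
open scoped ComplexConjugate

noncomputable section

lemma keyx16 (t r x : ℝ) (h0 : 0 ≤ r) (hrt : r < t) (hx2 : x ≤ r) :
    (3*t-2*x)*(t-r)^2 ≤ (3*t-2*r)*(t-x)^2 := by
  nlinarith [sq_nonneg (x - r), sq_nonneg (t - r),
    mul_nonneg (sub_nonneg.2 hx2) (sub_nonneg.2 hrt.le), sq_nonneg (t-x)]

lemma key_real16 (t r x v : ℝ) (h0 : 0 ≤ r) (hrt : r < t) (hx2 : x ≤ r) (hv : 0 ≤ v) :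
    ((3*t-2*x)^2+4*v)*(t-r)^4 ≤ (3*t-2*r)^2*((t-x)^2+v)^2 := by
  have h1 := keyx16 t r x h0 hrt hx2
  have h2 : 0 < t - r := sub_pos.2 hrt
  have h3 : t - r ≤ t - x := by linarith
  have h4 : 0 < 3*t - 2*r := by nlinarith
  have h5 : 0 ≤ 3*t - 2*x := by nlinarith
  have hA : (3*t-2*x)^2*(t-r)^4 ≤ (3*t-2*r)^2*(t-x)^4 := by
    have := mul_le_mul h1 h1 (by positivity) (by positivity)
    nlinarith [this]
  have hB : 4*(t-r)^4 ≤ 2*(3*t-2*r)^2*(t-x)^2 := by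
    have h6 : (t-r)^2 ≤ (t-x)^2 := by nlinarith
    have h7 : 2*(t-r) ≤ 3*t-2*r := by linarith
    have h8 : (2*(t-r))^2 ≤ (3*t-2*r)^2 := by
      exact mul_le_mul h7 h7 (by linarith) h4.le |>.trans_eq (by ring) |>.trans_eq' (by ring)
    nlinarith [mul_le_mul h8 h6 (sq_nonneg (t-r)) (sq_nonneg (3*t-2*r))]
  nlinarith [mul_le_mul_of_nonneg_right hB hv, sq_nonneg ((3*t-2*r)*v)]

lemma absC16 (t Z : ℝ) (w : ℂ) (hw : ‖w‖ ≤ Z) (hZ : 0 ≤ Z) (hZt : Z < t) :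
    ‖3*(t:ℂ)-2*w‖ * (t-Z)^2 ≤ (3*t-2*Z) * (‖(t:ℂ)-w‖)^2 := by
  have hx : w.re ≤ Z := (Complex.re_le_norm w).trans hw
  have key := key_real16 t Z w.re (w.im^2) hZ hZt hx (sq_nonneg _)
  have hn1 : (‖3*(t:ℂ)-2*w‖)^2 = (3*t-2*w.re)^2 + 4*w.im^2 := by
    rw [Complex.sq_norm, Complex.normSq_apply]
    simp [Complex.sub_re, Complex.sub_im]
    ring
  have hn2 : (‖(t:ℂ)-w‖)^2 = (t-w.re)^2 + w.im^2 := by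
    rw [Complex.sq_norm, Complex.normSq_apply]
    simp [Complex.sub_re, Complex.sub_im]
    ring
  have h3tZ : (0:ℝ) ≤ 3*t - 2*Z := by linarith
  have hsq : (‖3*(t:ℂ)-2*w‖ * (t-Z)^2)^2 ≤ ((3*t-2*Z) * (‖(t:ℂ)-w‖)^2)^2 := by
    calc (‖3*(t:ℂ)-2*w‖ * (t-Z)^2)^2
        = (‖3*(t:ℂ)-2*w‖)^2 * ((t-Z)^2)^2 := by ring
      _ = ((3*t-2*w.re)^2 + 4*w.im^2) * (t-Z)^4 := by rw [hn1]; ring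
      _ ≤ (3*t-2*Z)^2 * ((t-w.re)^2 + w.im^2)^2 := key
      _ = ((3*t-2*Z) * (‖(t:ℂ)-w‖)^2)^2 := by rw [hn2]; ring
  exact le_of_pow_le_pow_left₀ two_ne_zero
    (mul_nonneg h3tZ (sq_nonneg _)) hsq

lemma ident16 (tc w d : ℂ) (h1 : tc - w ≠ 0) (h2 : tc ≠ 0) :
    d/(tc-w)^2 = d/tc^2 + 2*(d*w)/tc^3 + d*w^2*(3*tc-2*w)/(tc^3*(tc-w)^2) := by
  field_simp
  ring

set_option maxHeartbeats 1000000 in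
theorem statement16 (n : ℕ) (hn : 0 < n) (z : Fin n → ℂ) (hz : ∀ j, 0 < (z j).im)
    (δ : Fin n → ℂ) (h0 : (∑ j, δ j).re = 0)
    (R : ℝ) (hR : R = (∑ j, δ j * conj (z j)).re) (hRne : R ≠ 0)
    (M₀ T : ℝ)
    (hM₀ : M₀ = 2 * (∑ j, ‖δ j‖ * ‖z j‖) / |R|)
    (hT : T = (M₀ + 1) * ⨆ j : Fin n, ‖z j‖) :
    ∀ t : ℝ, T < t →
      |(-(∑ j, δ j / ((t : ℂ) - conj (z j)) ^ 2).re) - (-(2 * R / t ^ 3))| <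
          |(-(2 * R / t ^ 3))| ∧
      (-(∑ j, δ j / ((t : ℂ) - conj (z j)) ^ 2).re) ≠ 0 := by
  intro t ht
  have j0 : Fin n := ⟨0, hn⟩
  obtain ⟨Z, hZdef⟩ : ∃ x : ℝ, x = ⨆ j : Fin n, ‖z j‖ := ⟨_, rfl⟩
  rw [← hZdef] at hT
  have hbdd : BddAbove (Set.range fun j : Fin n => ‖z j‖) :=
    Set.Finite.bddAbove (Set.finite_range _)
  have hZle : ∀ j, ‖z j‖ ≤ Z := fun j => hZdef ▸ le_ciSup hbdd j
  have hz0 : z j0 ≠ 0 := by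
    intro h
    have := hz j0
    rw [h] at this
    simp at this
  have hzj0 : 0 < ‖z j0‖ := norm_pos_iff.2 hz0
  have hZpos : 0 < Z := lt_of_lt_of_le hzj0 (hZle j0)
  obtain ⟨S, hSdef⟩ : ∃ x : ℝ, x = ∑ j, ‖δ j‖ * ‖z j‖ := ⟨_, rfl⟩
  rw [← hSdef] at hM₀
  have hRpos : 0 < |R| := abs_pos.2 hRne
  have hRS : |R| ≤ S := by
    rw [hR, hSdef]
    calc |(∑ j, δ j * conj (z j)).re| ≤ ‖∑ j, δ j * conj (z j)‖ :=
          Complex.abs_re_le_norm _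
      _ ≤ ∑ j, ‖δ j * conj (z j)‖ := norm_sum_le _ _
      _ = ∑ j, ‖δ j‖ * ‖z j‖ := by
          simp [norm_mul, Complex.norm_conj]
  have hM2 : 2 ≤ M₀ := by
    rw [hM₀, le_div_iff₀ hRpos]; linarith
  have hZt : Z < t := by
    have h1 : (M₀ + 1) * Z ≥ 3 * Z := by nlinarith
    rw [hT] at ht
    nlinarith
  have htpos : 0 < t := hZpos.trans hZt
  have htC : (t:ℂ) ≠ 0 := by exact_mod_cast htpos.ne'
  have hne : ∀ j, (t:ℂ) - conj (z j) ≠ 0 := by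
    intro j h
    have him : ((t:ℂ) - conj (z j)).im = 0 := by rw [h]; simp
    rw [Complex.sub_im, Complex.conj_im, Complex.ofReal_im] at him
    have := hz j
    linarith
  obtain ⟨E, hEdef⟩ : ∃ x : ℂ, x = ∑ j, δ j * (conj (z j))^2 * (3*(t:ℂ)-2*conj (z j))/((t:ℂ)^3*((t:ℂ)-conj (z j))^2) := ⟨_, rfl⟩
  have hsum : ∑ j, δ j / ((t:ℂ) - conj (z j))^2
      = (∑ j, δ j)/(t:ℂ)^2 + 2*(∑ j, δ j * conj (z j))/(t:ℂ)^3 + E := by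
    rw [hEdef, Finset.sum_div, Finset.mul_sum, Finset.sum_div, ← Finset.sum_add_distrib,
      ← Finset.sum_add_distrib]
    exact Finset.sum_congr rfl fun j _ => ident16 (t:ℂ) (conj (z j)) (δ j) (hne j) htC
  have hre1 : ((∑ j, δ j)/(t:ℂ)^2).re = 0 := by
    have h2 : ((t:ℂ)^2) = ((t^2:ℝ):ℂ) := by push_cast; ring
    rw [h2, Complex.div_ofReal_re, h0, zero_div]
  have hre2 : (2*(∑ j, δ j * conj (z j))/(t:ℂ)^3).re = 2*R/t^3 := by
    have h3 : ((t:ℂ)^3) = ((t^3:ℝ):ℂ) := by push_cast; ring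
    have h4 : ((2:ℂ)*(∑ j, δ j * conj (z j))).re = 2*R := by
      rw [hR]; simp [Complex.mul_re]
    rw [h3, Complex.div_ofReal_re, h4, mul_div_assoc]
  have hCd : (∑ j, δ j / ((t:ℂ) - conj (z j))^2).re = 2*R/t^3 + E.re := by
    rw [hsum, Complex.add_re, Complex.add_re, hre1, hre2]
    ring
  have ht3 : (0:ℝ) < t^3 := by positivity
  have htZ2 : (0:ℝ) < (t-Z)^2 := pow_pos (sub_pos.2 hZt) 2
  have h3tZ : (0:ℝ) < 3*t - 2*Z := by linarith
  have hterm : ∀ j, ‖δ j * (conj (z j))^2 * (3*(t:ℂ)-2*conj (z j))/((t:ℂ)^3*((t:ℂ)-conj (z j))^2)‖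
      ≤ ‖δ j‖ * ‖z j‖ * (Z*(3*t-2*Z)/(t^3*(t-Z)^2)) := by
    intro j
    set w := conj (z j) with hw
    have hwabs : ‖w‖ = ‖z j‖ := Complex.norm_conj _
    have habsC := absC16 t Z w (by rw [hwabs]; exact hZle j) hZpos.le hZt
    have hBpos : 0 < ‖(t:ℂ) - w‖ := norm_pos_iff.2 (hne j)
    have habs : ‖δ j * w^2 * (3*(t:ℂ)-2*w)/((t:ℂ)^3*((t:ℂ)-w)^2)‖
        = ‖δ j‖ * (‖w‖)^2 * ‖3*(t:ℂ)-2*w‖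
          / (t^3 * (‖(t:ℂ)-w‖)^2) := by
      rw [norm_div]
      simp only [norm_mul, norm_pow, Complex.norm_real, Real.norm_eq_abs, abs_of_pos htpos]
    have hb : (‖w‖)^2 ≤ ‖z j‖ * Z := by
      rw [hwabs]
      nlinarith [hZle j, norm_nonneg (z j)]
    have hgoal : ‖δ j‖ * (‖w‖)^2 * ‖3*(t:ℂ)-2*w‖ * (t^3*(t-Z)^2)
        ≤ ‖δ j‖ * ‖z j‖ * (Z*(3*t-2*Z)) * (t^3 * (‖(t:ℂ)-w‖)^2) := by
      calc ‖δ j‖ * (‖w‖)^2 * ‖3*(t:ℂ)-2*w‖ * (t^3*(t-Z)^2)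
          = (‖δ j‖ * t^3) * ((‖w‖)^2 * (‖3*(t:ℂ)-2*w‖ * (t-Z)^2)) := by ring
        _ ≤ (‖δ j‖ * t^3) * ((‖z j‖ * Z) * ((3*t-2*Z) * (‖(t:ℂ)-w‖)^2)) := by
            refine mul_le_mul_of_nonneg_left ?_ (by positivity)
            exact mul_le_mul hb habsC (by positivity) (by positivity)
        _ = ‖δ j‖ * ‖z j‖ * (Z*(3*t-2*Z)) * (t^3 * (‖(t:ℂ)-w‖)^2) := by ring
    rw [habs, ← mul_div_assoc, div_le_div_iff₀ (mul_pos ht3 (pow_pos hBpos 2)) (mul_pos ht3 htZ2)]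
    nlinarith [hgoal]
  have hEbound : ‖E‖ ≤ S * (Z*(3*t-2*Z)/(t^3*(t-Z)^2)) := by
    rw [hEdef]
    refine le_trans (norm_sum_le _ _) ?_
    rw [hSdef, Finset.sum_mul]
    exact Finset.sum_le_sum fun j _ => hterm j
  have hSM : M₀ * |R| = 2 * S := by
    rw [hM₀, div_mul_cancel₀ _ hRpos.ne']
  have hM₀pos : (0:ℝ) < M₀ := by linarith
  have he' : 0 < t - (M₀+1)*Z := by rw [hT] at ht; linarith
  have hM1 : (0:ℝ) < M₀ - 1 := by linarith
  have hp1 : 0 < (t - (M₀+1)*Z) * Z * M₀ := mul_pos (mul_pos he' hZpos) hM₀pos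
  have hp2 : 0 < M₀ * (M₀-1) * (Z*Z) := mul_pos (mul_pos hM₀pos hM1) (mul_pos hZpos hZpos)
  have hkey : M₀*(Z*(3*t-2*Z)) < 4*(t-Z)^2 := by
    nlinarith [sq_nonneg (t-(M₀+1)*Z), hp1, hp2]
  have hfinal : S * (Z*(3*t-2*Z)/(t^3*(t-Z)^2)) < 2 * |R| / t^3 := by
    rw [← mul_div_assoc, div_lt_div_iff₀ (mul_pos ht3 htZ2) ht3]
    have h1 : M₀*(Z*(3*t-2*Z))*(|R| * t^3) < 4*(t-Z)^2*(|R| * t^3) :=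
      mul_lt_mul_of_pos_right hkey (mul_pos hRpos ht3)
    have h2 : M₀*(Z*(3*t-2*Z))*(|R| * t^3) = 2*(S*(Z*(3*t-2*Z))*t^3) := by
      linear_combination (Z*(3*t-2*Z))*t^3 * hSM
    nlinarith [h1, h2]
  have hEre : |E.re| < 2 * |R| / t^3 :=
    lt_of_le_of_lt ((Complex.abs_re_le_norm E).trans hEbound) hfinal
  have habsD : |(-(2 * R / t ^ 3))| = 2 * |R| / t ^ 3 := by
    rw [abs_neg, abs_div, abs_of_pos ht3, abs_mul, _root_.abs_two]
  have hdiff : (-(∑ j, δ j / ((t : ℂ) - conj (z j)) ^ 2).re) - (-(2 * R / t ^ 3)) = -E.re := by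
    rw [hCd]; ring
  have hmain : |(-(∑ j, δ j / ((t : ℂ) - conj (z j)) ^ 2).re) - (-(2 * R / t ^ 3))| <
      |(-(2 * R / t ^ 3))| := by
    rw [hdiff, abs_neg, habsD]
    exact hEre
  refine ⟨hmain, fun hC => ?_⟩
  rw [hC] at hmain
  simp only [zero_sub, abs_neg, lt_self_iff_false] at hmain
end
end

section
/- Given z₁ ∈ ℍ₊ and w₁ ∈ ℂ with Im(w₁) > 0 and Im(z₁·w₁) > 0, with parameters t_*, σ_*, γ_*, σ^* as below, let g(z) = γ_g − σ₀/z + Σ_{j=1}^n σ_j/(t_j − z) with γ_g ≥ 0, σ₀ ≥ 0, σ_j > 0 and 0 < t₁ < t₂ < … < tₙ, and define f(z) = (g(z)·(γ_*·z − σ^*) − σ_*)/(z·g(z) + z − t_*). Then there exist ν₁,…,ν_{n+1} > 0 and τ₁,…,τ_{n+1} satisfying the interlacing property 0 < τ₁ < t₁ < τ₂ < t₂ < … < tₙ < τ_{n+1} such that f(z) = γ_f − ν₀/z + Σ_{j=1}^{n+1} ν_j/(τ_j − z), where γ_f = γ_*·γ_g/(γ_g + 1) and ν₀ = σ₀·σ^*/(σ₀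 + t_*). -/
open Complex MeasureTheory Polynomial Matrix
open scoped ComplexConjugate

noncomputable section

/-- `t_* = Im(z₁w₁)/Im(w₁)`. -/
def tstar (z₁ w₁ : ℂ) : ℝ := (z₁ * w₁).im / w₁.im

/-- `σ_* = |w₁|²·Im(z₁)/Im(w₁)`. -/
def sigmaStar (z₁ w₁ : ℂ) : ℝ := ‖w₁‖ ^ 2 * z₁.im / w₁.im

/-- `γ_* = Im(z₁w₁)/Im(z₁)`. -/
def gammaStar (z₁ w₁ : ℂ) : ℝ := (z₁ * w₁).im / z₁.im

/-- `σ^* = |z₁|²·Im(w₁)/Im(z₁)`. -/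
def sigmaUpStar (z₁ w₁ : ℂ) : ℝ := ‖z₁‖ ^ 2 * w₁.im / z₁.im

open Finset


lemma polyEqOfValues {N : ℕ} (p q : Polynomial ℝ) (hp : p.natDegree ≤ N) (hq : q.natDegree ≤ N)
    (hc : p.coeff N = q.coeff N) (e : Fin N → ℝ) (he : Function.Injective e)
    (hev : ∀ i, p.eval (e i) = q.eval (e i)) : p = q := by
  by_cases h0 : p - q = 0
  · exact sub_eq_zero.mp h0
  have hle : (p - q).natDegree ≤ N := le_trans (natDegree_sub_le p q) (by simp [hp, hq])
  have hcoeff : (p - q).coeff N = 0 := by simp [coeff_sub, hc]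
  have hne : (p - q).natDegree ≠ N := by
    intro h
    exact h0 (leadingCoeff_eq_zero.mp (by rw [leadingCoeff, h]; exact hcoeff))
  have hlt : (p - q).natDegree < N := lt_of_le_of_ne hle hne
  have := Polynomial.eq_zero_of_natDegree_lt_card_of_eval_eq_zero (p - q) he
    (fun i => by simp [hev i]) (by simpa using hlt)
  exact sub_eq_zero.mp this

lemma prodNegCard {α : Type*} (s : Finset α) (c : α → ℝ) :
    ∏ k ∈ s, c k = (-1) ^ s.card * ∏ k ∈ s, (-(c k)) := by
  have h : ∏ k ∈ s, (-(c k)) = ∏ k ∈ s, ((-1) * c k) := by simp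
  rw [h, Finset.prod_mul_distrib, Finset.prod_const, ← mul_assoc, ← pow_add, ← two_mul, pow_mul]
  norm_num

lemma signProdErase {m : ℕ} (c : Fin m → ℝ) (j : Fin m)
    (hneg : ∀ k, k < j → c k < 0) (hpos : ∀ k, j < k → 0 < c k) :
    0 < (-1 : ℝ) ^ (j : ℕ) * ∏ k ∈ Finset.univ.erase j, c k := by
  have hsplit : Finset.univ.erase j = Finset.Iio j ∪ Finset.Ioi j := by
    ext k
    simp only [Finset.mem_erase, Finset.mem_univ, and_true, Finset.mem_union, Finset.mem_Iio,
      Finset.mem_Ioi]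
    constructor
    · exact fun h => lt_or_gt_of_ne h
    · rintro (h | h) <;> [exact ne_of_lt h; exact ne_of_gt h]
  have hdisj : Disjoint (Finset.Iio j) (Finset.Ioi j) := by
    rw [Finset.disjoint_left]
    intro a h1 h2
    exact absurd (Finset.mem_Ioi.mp h2) (not_lt.mpr (Finset.mem_Iio.mp h1).le)
  rw [hsplit, Finset.prod_union hdisj]
  have h1 : ∏ k ∈ Finset.Iio j, c k = (-1) ^ (j : ℕ) * ∏ k ∈ Finset.Iio j, (-(c k)) := by
    rw [prodNegCard, Fin.card_Iio]
  rw [h1, ← mul_assoc, ← mul_assoc, ← pow_add, ← two_mul, pow_mul]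
  have h2 : ((-1 : ℝ) ^ 2) ^ (j : ℕ) = 1 := by norm_num
  rw [h2, one_mul]
  exact mul_pos (Finset.prod_pos (fun k hk => neg_pos.mpr (hneg k (Finset.mem_Iio.mp hk))))
    (Finset.prod_pos (fun k hk => hpos k (Finset.mem_Ioi.mp hk)))

noncomputable section

def lampoly {m : ℕ} (t : Fin m → ℝ) : Polynomial ℝ := ∏ k, (C (t k) - X)

def sumpoly {m : ℕ} (t s : Fin m → ℝ) : Polynomial ℝ :=
  ∑ j, C (s j) * (X * ∏ k ∈ Finset.univ.erase j, (C (t k) - X))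

def Ppoly {m : ℕ} (γg σ₀T : ℝ) (t s : Fin m → ℝ) : Polynomial ℝ :=
  C (γg + 1) * (X * lampoly t) - C σ₀T * lampoly t + sumpoly t s

-- lemmas
lemma prodLin_natDegree {m : ℕ} (t : Fin m → ℝ) :
    (∏ k, (C (t k) - X) : Polynomial ℝ).natDegree = m ∧
    (∏ k, (C (t k) - X) : Polynomial ℝ).leadingCoeff = (-1) ^ m := by
  have h : (∏ k, (C (t k) - X) : Polynomial ℝ) = C ((-1) ^ m) * ∏ k, (X - C (t k)) := by
    have : ∀ k : Fin m, (C (t k) - X : Polynomial ℝ) = (-1) * (X - C (t k)) := by intro k; ring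
    rw [Finset.prod_congr rfl (fun k _ => this k), Finset.prod_mul_distrib, Finset.prod_const]
    simp [Finset.card_univ, map_pow]
  have hmon : ((∏ k, (X - C (t k)) : Polynomial ℝ)).Monic :=
    monic_prod_of_monic _ _ (fun k _ => monic_X_sub_C _)
  have hdeg : ((∏ k, (X - C (t k)) : Polynomial ℝ)).natDegree = m := by
    rw [natDegree_prod_of_monic _ _ (fun k _ => monic_X_sub_C _)]
    simp
  have hne : ((-1:ℝ))^m ≠ 0 := pow_ne_zero _ (by norm_num)
  exact ⟨by rw [h, natDegree_C_mul hne]; exact hdeg,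
    by rw [h, leadingCoeff_mul, leadingCoeff_C, hmon.leadingCoeff, mul_one]⟩

lemma lam_natDegree {m : ℕ} (t : Fin m → ℝ) : (lampoly t).natDegree = m :=
  (prodLin_natDegree t).1

lemma lam_coeff_top {m : ℕ} (t : Fin m → ℝ) : (lampoly t).coeff m = (-1) ^ m := by
  have h := (prodLin_natDegree t).2
  rw [leadingCoeff] at h
  rw [show (∏ k, (C (t k) - X) : Polynomial ℝ).natDegree = m from (prodLin_natDegree t).1] at h
  exact h

lemma lam_coeff_gt {m k : ℕ} (t : Fin m → ℝ) (hk : m < k) : (lampoly t).coeff k = 0 :=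
  coeff_eq_zero_of_natDegree_lt (by rw [lam_natDegree]; exact hk)

lemma prodLinErase_natDegree_le {m : ℕ} (t : Fin m → ℝ) (j : Fin m) :
    (∏ k ∈ Finset.univ.erase j, (C (t k) - X) : Polynomial ℝ).natDegree ≤ m - 1 := by
  refine le_trans (natDegree_prod_le _ _) ?_
  calc ∑ k ∈ Finset.univ.erase j, (C (t k) - X : Polynomial ℝ).natDegree
      ≤ ∑ k ∈ Finset.univ.erase j, 1 := Finset.sum_le_sum (fun k _ => by
        rw [show (C (t k) - X : Polynomial ℝ) = -(X - C (t k)) by ring, natDegree_neg,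
          natDegree_X_sub_C])
    _ = m - 1 := by rw [Finset.sum_const, Finset.card_erase_of_mem (Finset.mem_univ j)]; simp

lemma sumpoly_natDegree_le {m : ℕ} (t s : Fin m → ℝ) : (sumpoly t s).natDegree ≤ m := by
  refine le_trans (natDegree_sum_le _ _) ?_
  rw [Finset.fold_max_le]
  refine ⟨Nat.zero_le _, fun j _ => ?_⟩
  refine le_trans (natDegree_mul_le) ?_
  rw [natDegree_C, zero_add]
  refine le_trans (natDegree_mul_le) ?_
  rw [natDegree_X]
  have := prodLinErase_natDegree_le t j
  have hm : 0 < m := j.pos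
  omega

lemma sumpoly_coeff_gt {m k : ℕ} (t s : Fin m → ℝ) (hk : m < k) : (sumpoly t s).coeff k = 0 :=
  coeff_eq_zero_of_natDegree_lt (lt_of_le_of_lt (sumpoly_natDegree_le t s) hk)

lemma Ppoly_natDegree_le {m : ℕ} (γg σ₀T : ℝ) (t s : Fin m → ℝ) :
    (Ppoly γg σ₀T t s).natDegree ≤ m + 1 := by
  refine le_trans (natDegree_add_le _ _) ?_
  rw [max_le_iff]
  constructor
  · refine le_trans (natDegree_sub_le _ _) ?_
    rw [max_le_iff]
    constructor
    · refine le_trans natDegree_mul_le ?_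
      rw [natDegree_C, zero_add]
      refine le_trans natDegree_mul_le ?_
      rw [natDegree_X, lam_natDegree]
      omega
    · refine le_trans natDegree_mul_le ?_
      rw [natDegree_C, zero_add, lam_natDegree]
      omega
  · exact le_trans (sumpoly_natDegree_le t s) (by omega)

lemma Ppoly_coeff_top {m : ℕ} (γg σ₀T : ℝ) (t s : Fin m → ℝ) :
    (Ppoly γg σ₀T t s).coeff (m+1) = (γg + 1) * (-1) ^ m := by
  rw [Ppoly, coeff_add, coeff_sub, coeff_C_mul, coeff_C_mul, coeff_X_mul, lam_coeff_top,
    lam_coeff_gt t (by omega), sumpoly_coeff_gt t s (by omega)]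
  ring

lemma Ppoly_natDegree {m : ℕ} (γg σ₀T : ℝ) (hγ : γg + 1 ≠ 0) (t s : Fin m → ℝ) :
    (Ppoly γg σ₀T t s).natDegree = m + 1 := by
  refine le_antisymm (Ppoly_natDegree_le _ _ _ _) (le_natDegree_of_ne_zero ?_)
  rw [Ppoly_coeff_top]
  exact mul_ne_zero hγ (pow_ne_zero _ (by norm_num))

def PApoly {m : ℕ} (γg σ₀T G U a b2 : ℝ) (t s : Fin m → ℝ) : Polynomial ℝ :=
  C G * (X * Ppoly γg σ₀T t s) - C U * Ppoly γg σ₀T t s -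
    (C G * (X * (X * lampoly t)) - C (G * (2 * a)) * (X * lampoly t) +
      C (G * (a ^ 2 + b2)) * lampoly t)

lemma Ppoly_coeff_gt {m : ℕ} (γg σ₀T : ℝ) (t s : Fin m → ℝ) {k : ℕ} (hk : m + 1 < k) :
    (Ppoly γg σ₀T t s).coeff k = 0 :=
  coeff_eq_zero_of_natDegree_lt (lt_of_le_of_lt (Ppoly_natDegree_le _ _ _ _) hk)

lemma PApoly_coeff_top {m : ℕ} (γg σ₀T G U a b2 : ℝ) (t s : Fin m → ℝ) :
    (PApoly γg σ₀T G U a b2 t s).coeff (m + 2) = G * γg * (-1) ^ m := by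
  rw [PApoly]
  simp only [coeff_sub, coeff_add, coeff_C_mul]
  rw [show m + 2 = (m + 1) + 1 from rfl, coeff_X_mul, coeff_X_mul, coeff_X_mul, coeff_X_mul,
    Ppoly_coeff_top, Ppoly_coeff_gt _ _ _ _ (by omega), lam_coeff_top,
    lam_coeff_gt t (by omega), lam_coeff_gt t (by omega)]
  ring

lemma PApoly_natDegree_le {m : ℕ} (γg σ₀T G U a b2 : ℝ) (t s : Fin m → ℝ) :
    (PApoly γg σ₀T G U a b2 t s).natDegree ≤ m + 2 := by
  have hP := Ppoly_natDegree_le γg σ₀T t s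
  have hl := lam_natDegree t
  refine le_trans (natDegree_sub_le _ _) ?_
  rw [max_le_iff]
  constructor
  · refine le_trans (natDegree_sub_le _ _) ?_
    rw [max_le_iff]
    refine ⟨le_trans natDegree_mul_le ?_, le_trans natDegree_mul_le ?_⟩
    · rw [natDegree_C, zero_add]
      refine le_trans natDegree_mul_le ?_
      rw [natDegree_X]; omega
    · rw [natDegree_C, zero_add]; omega
  · refine le_trans (natDegree_add_le _ _) ?_
    rw [max_le_iff]
    constructor
    · refine le_trans (natDegree_sub_le _ _) ?_
      rw [max_le_iff]
      refine ⟨le_trans natDegree_mul_le ?_, le_trans natDegree_mul_le ?_⟩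
      · rw [natDegree_C, zero_add]
        refine le_trans natDegree_mul_le ?_
        rw [natDegree_X]
        have : (X * lampoly t : Polynomial ℝ).natDegree ≤ m + 1 := by
          refine le_trans natDegree_mul_le ?_
          rw [natDegree_X]; omega
        omega
      · rw [natDegree_C, zero_add]
        refine le_trans natDegree_mul_le ?_
        rw [natDegree_X]; omega
    · refine le_trans natDegree_mul_le ?_
      rw [natDegree_C, zero_add]; omega

lemma eval_lam {m : ℕ} (t : Fin m → ℝ) (x : ℝ) : (lampoly t).eval x = ∏ k, (t k - x) := by
  simp [lampoly, eval_prod]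

lemma eval_sumpoly {m : ℕ} (t s : Fin m → ℝ) (x : ℝ) :
    (sumpoly t s).eval x = ∑ j, s j * (x * ∏ k ∈ Finset.univ.erase j, (t k - x)) := by
  simp [sumpoly, eval_finset_sum, eval_prod]

lemma eval_Ppoly {m : ℕ} (γg σ₀T : ℝ) (t s : Fin m → ℝ) (x : ℝ) :
    (Ppoly γg σ₀T t s).eval x = (γg + 1) * (x * ∏ k, (t k - x)) - σ₀T * ∏ k, (t k - x) +
      ∑ j, s j * (x * ∏ k ∈ Finset.univ.erase j, (t k - x)) := by
  simp [Ppoly, eval_lam, eval_sumpoly]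

lemma eval_PApoly {m : ℕ} (γg σ₀T G U a b2 : ℝ) (t s : Fin m → ℝ) (x : ℝ) :
    (PApoly γg σ₀T G U a b2 t s).eval x =
      (G * x - U) * (Ppoly γg σ₀T t s).eval x -
        G * ((x - a) ^ 2 + b2) * ∏ k, (t k - x) := by
  simp only [PApoly, eval_sub, eval_add, eval_mul, eval_C, eval_X, eval_lam]
  ring

lemma eval_Ppoly_zero {m : ℕ} (γg σ₀T : ℝ) (t s : Fin m → ℝ) :
    (Ppoly γg σ₀T t s).eval 0 = -σ₀T * ∏ k, t k := by
  rw [eval_Ppoly]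
  simp

lemma eval_Ppoly_t {m : ℕ} (γg σ₀T : ℝ) (t s : Fin m → ℝ) (j : Fin m) :
    (Ppoly γg σ₀T t s).eval (t j) =
      s j * (t j * ∏ k ∈ Finset.univ.erase j, (t k - t j)) := by
  rw [eval_Ppoly]
  have h0 : ∏ k, (t k - t j) = 0 :=
    Finset.prod_eq_zero (Finset.mem_univ j) (by ring)
  rw [h0]
  rw [Finset.sum_eq_single j]
  · ring
  · intro k _ hk
    have : ∏ l ∈ Finset.univ.erase k, (t l - t j) = 0 :=
      Finset.prod_eq_zero (Finset.mem_erase.mpr ⟨(Ne.symm hk), Finset.mem_univ j⟩) (by ring)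
    rw [this]; ring
  · intro h; exact absurd (Finset.mem_univ j) h

lemma exists_interlacing_roots {m : ℕ} (γg σ₀T : ℝ) (hγ : 0 ≤ γg) (hσ : 0 < σ₀T)
    (t s : Fin m → ℝ) (hs : ∀ j, 0 < s j) (ht : ∀ j, 0 < t j) (hmono : StrictMono t) :
    ∃ τ : Fin (m+1) → ℝ, (∀ j, (Ppoly γg σ₀T t s).eval (τ j) = 0) ∧ 0 < τ 0 ∧
      (∀ j : Fin m, τ j.castSucc < t j ∧ t j < τ j.succ) := by
  set P := Ppoly γg σ₀T t s with hP
  set F : ℝ → ℝ := fun x => P.eval x with hF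
  have htprod : 0 < ∏ k, t k := Finset.prod_pos (fun k _ => ht k)
  have sign0 : F 0 < 0 := by
    rw [hF]; simp only [hP]; rw [eval_Ppoly_zero]
    nlinarith
  have signt : ∀ j : Fin m, 0 < (-1 : ℝ) ^ (j : ℕ) * F (t j) := by
    intro j
    have h1 := signProdErase (fun k => t k - t j) j
      (fun k hk => sub_neg.mpr (hmono hk)) (fun k hk => sub_pos.mpr (hmono hk))
    have h2 : F (t j) = s j * (t j * ∏ k ∈ Finset.univ.erase j, (t k - t j)) :=
      eval_Ppoly_t γg σ₀T t s j
    rw [h2, show (-1:ℝ)^(j:ℕ) * (s j * (t j * ∏ k ∈ Finset.univ.erase j, (t k - t j))) =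
      (s j * t j) * ((-1:ℝ)^(j:ℕ) * ∏ k ∈ Finset.univ.erase j, (t k - t j)) by ring]
    exact mul_pos (mul_pos (hs j) (ht j)) h1
  -- big M
  have hγ1 : (γg + 1) ≠ 0 := by linarith
  have hPdeg : P.natDegree = m + 1 := Ppoly_natDegree _ _ hγ1 _ _
  have hPlc : P.leadingCoeff = (γg + 1) * (-1) ^ m := by
    rw [leadingCoeff, hPdeg]; exact Ppoly_coeff_top _ _ _ _
  have hPne : P ≠ 0 := by
    intro h
    rw [h] at hPlc
    simp only [leadingCoeff_zero] at hPlc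
    have : ((-1:ℝ))^m ≠ 0 := pow_ne_zero _ (by norm_num)
    exact this (by
      rcases mul_eq_zero.mp hPlc.symm with h' | h'
      · exact absurd h' hγ1
      · exact h')
  set P' : Polynomial ℝ := C ((-1:ℝ)^m) * P with hP'
  have hcne : ((-1:ℝ))^m ≠ 0 := pow_ne_zero _ (by norm_num)
  have hsq : (-1:ℝ)^m * (-1)^m = 1 := by
    rw [← pow_add, ← two_mul, pow_mul]; norm_num
  have hP'lc : P'.leadingCoeff = γg + 1 := by
    rw [hP', leadingCoeff_mul, leadingCoeff_C, hPlc]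
    nlinarith [hsq]
  have hP'ne : P' ≠ 0 := mul_ne_zero (by simpa using hcne) hPne
  have hP'deg : 0 < P'.degree := by
    rw [← natDegree_pos_iff_degree_pos, hP', natDegree_C_mul hcne, hPdeg]
    omega
  have htend := P'.tendsto_atTop_of_leadingCoeff_nonneg hP'deg (by rw [hP'lc]; linarith)
  have hev : ∀ᶠ x in Filter.atTop, (0 < x ∧ 0 < (-1:ℝ)^m * F x) ∧ ∀ j, t j < x := by
    refine Filter.Eventually.and (Filter.Eventually.and (Filter.eventually_gt_atTop 0) ?_)
      (Filter.eventually_all.mpr (fun j => Filter.eventually_gt_atTop (t j)))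
    have := htend.eventually_gt_atTop 0
    refine this.mono (fun x hx => ?_)
    rw [hP'] at hx
    simpa [eval_mul] using hx
  obtain ⟨M, ⟨hM0, hMsign⟩, hMt⟩ := hev.exists
  -- endpoints
  set L : Fin (m+1) → ℝ := Fin.cases 0 t with hLdef
  set R : Fin (m+1) → ℝ := fun j => if h : (j : ℕ) < m then t ⟨(j:ℕ), h⟩ else M with hRdef
  have hL : ∀ j : Fin (m+1), (-1:ℝ)^(j:ℕ) * F (L j) < 0 := by
    intro j
    induction j using Fin.cases with
    | zero => simpa [hLdef] using sign0
    | succ i =>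
      have h1 := signt i
      simp only [hLdef, Fin.cases_succ, Fin.val_succ, pow_succ]
      nlinarith
  have hR : ∀ j : Fin (m+1), 0 < (-1:ℝ)^(j:ℕ) * F (R j) := by
    intro j
    by_cases h : (j:ℕ) < m
    · rw [hRdef]; simp only [dif_pos h]
      simpa using signt ⟨(j:ℕ), h⟩
    · have hj : (j:ℕ) = m := by have := j.isLt; omega
      rw [hRdef]; simp only [dif_neg h]
      rw [hj]; exact hMsign
  have hLR : ∀ j : Fin (m+1), L j < R j := by
    intro j
    induction j using Fin.cases with
    | zero =>
      by_cases h : ((0 : Fin (m+1)):ℕ) < m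
      · rw [hRdef]; simp only [dif_pos h]
        simpa [hLdef] using ht _
      · rw [hRdef]; simp only [dif_neg h]
        simpa [hLdef] using hM0
    | succ i =>
      by_cases h : ((i.succ : Fin (m+1)):ℕ) < m
      · rw [hRdef]; simp only [dif_pos h]
        simp only [hLdef, Fin.cases_succ]
        exact hmono (by rw [Fin.lt_def]; simp)
      · rw [hRdef]; simp only [dif_neg h]
        simp only [hLdef, Fin.cases_succ]
        exact hMt i
  have key : ∀ j : Fin (m+1), ∃ x, L j < x ∧ x < R j ∧ F x = 0 := by
    intro j
    have hcont : Continuous (fun x => (-1:ℝ)^(j:ℕ) * F x) :=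
      continuous_const.mul P.continuous
    have hsub := intermediate_value_Ioo (hLR j).le hcont.continuousOn
    have hmem : (0:ℝ) ∈ Set.Ioo ((-1:ℝ)^(j:ℕ) * F (L j)) ((-1:ℝ)^(j:ℕ) * F (R j)) :=
      ⟨hL j, hR j⟩
    obtain ⟨x, hx, hfx⟩ := hsub hmem
    refine ⟨x, hx.1, hx.2, ?_⟩
    rcases mul_eq_zero.mp hfx with h' | h'
    · exact absurd h' (pow_ne_zero _ (by norm_num))
    · exact h'
  choose τ h1 h2 h3 using key
  refine ⟨τ, fun j => h3 j, ?_, fun j => ⟨?_, ?_⟩⟩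
  · have := h1 0
    simpa [hLdef] using this
  · have := h2 j.castSucc
    have hcs : ((j.castSucc : Fin (m+1)) : ℕ) < m := by simpa using j.isLt
    simp only [hRdef] at this
    rw [dif_pos hcs] at this
    simpa using this
  · have := h1 j.succ
    simpa [hLdef] using this

lemma prod_erase_eq_succAbove {m : ℕ} (j : Fin (m+1)) (f : Fin (m+1) → ℝ) :
    ∏ k ∈ Finset.univ.erase j, f k = ∏ k : Fin m, f (j.succAbove k) := by
  rw [← Finset.compl_singleton, ← Fin.image_succAbove_univ,
    Finset.prod_image (fun a _ b _ h => Fin.succAbove_right_injective h)]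

lemma real_side {m : ℕ} (γg σ₀ T G U a b : ℝ) (hγg : 0 ≤ γg) (hσ₀ : 0 ≤ σ₀) (hT : 0 < T)
    (hG : 0 < G) (hb : 0 < b) (hc2 : U * T = G * (a ^ 2 + b ^ 2))
    (t s : Fin m → ℝ) (hs : ∀ j, 0 < s j) (ht : ∀ j, 0 < t j) (hmono : StrictMono t) :
    ∃ ν τ : Fin (m+1) → ℝ, (∀ j, 0 < ν j) ∧ 0 < τ 0 ∧
      (∀ j : Fin m, τ j.castSucc < t j ∧ t j < τ j.succ) ∧
      Ppoly γg (σ₀ + T) t s = C (-(γg+1)) * lampoly τ ∧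
      PApoly γg (σ₀ + T) G U a (b^2) t s =
        C (-(γg+1)) * Ppoly (G * γg / (γg + 1) - 1) (σ₀ * U / (σ₀ + T)) τ ν := by
  have hσT : 0 < σ₀ + T := by linarith
  have hγ1 : (0:ℝ) < γg + 1 := by linarith
  have hγ1ne : (γg + 1 : ℝ) ≠ 0 := ne_of_gt hγ1
  obtain ⟨τ, heval, hτ0, hint⟩ :=
    exists_interlacing_roots γg (σ₀ + T) hγg hσT t s hs ht hmono
  have hτmono : StrictMono τ := by
    rw [Fin.strictMono_iff_lt_succ]
    intro i
    exact lt_trans (hint i).1 (hint i).2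
  have hτpos : ∀ j, 0 < τ j := fun j => lt_of_lt_of_le hτ0 (hτmono.monotone (Fin.zero_le j))
  -- order relations between t and τ
  have lemA : ∀ (k : Fin m) (j : Fin (m+1)), (j:ℕ) ≤ (k:ℕ) → τ j < t k := by
    intro k j h
    refine lt_of_le_of_lt (hτmono.monotone ?_) (hint k).1
    rw [Fin.le_def]; simpa using h
  have lemB : ∀ (k : Fin m) (j : Fin (m+1)), (k:ℕ) < (j:ℕ) → t k < τ j := by
    intro k j h
    refine lt_of_lt_of_le (hint k).2 (hτmono.monotone ?_)
    rw [Fin.le_def]; simpa using h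
  -- positivity of paired product
  have hpair : ∀ j : Fin (m+1),
      0 < (∏ k, (t k - τ j)) * ∏ k ∈ Finset.univ.erase j, (τ k - τ j) := by
    intro j
    rw [prod_erase_eq_succAbove j (fun k => τ k - τ j), ← Finset.prod_mul_distrib]
    refine Finset.prod_pos (fun k _ => ?_)
    by_cases h : k.castSucc < j
    · rw [Fin.succAbove_of_castSucc_lt _ _ h]
      have h1 : t k < τ j := by
        refine lemB k j ?_
        have := h
        rw [Fin.lt_def] at this
        simpa using this
      have h2 : τ k.castSucc < τ j := hτmono h
      exact mul_pos_of_neg_of_neg (by linarith) (by linarith)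
    · push_neg at h
      rw [Fin.succAbove_of_le_castSucc _ _ h]
      have h1 : τ j < t k := by
        refine lemA k j ?_
        rw [Fin.le_def] at h
        simpa using h
      have h2 : τ j < τ k.succ :=
        lt_of_le_of_lt (hτmono.monotone h) (hτmono (Fin.castSucc_lt_succ : k.castSucc < k.succ))
      exact mul_pos (by linarith) (by linarith)
  have hDne : ∀ j : Fin (m+1), (∏ k ∈ Finset.univ.erase j, (τ k - τ j)) ≠ 0 := by
    intro j h
    have := hpair j
    rw [h, mul_zero] at this
    exact lt_irrefl _ this
  -- define ν
  set ν : Fin (m+1) → ℝ := fun j =>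
    (G * ((τ j - a)^2 + b^2) * ∏ k, (t k - τ j)) /
      ((γg + 1) * (τ j * ∏ k ∈ Finset.univ.erase j, (τ k - τ j))) with hν
  have hνpos : ∀ j, 0 < ν j := by
    intro j
    have hδ : 0 < G * ((τ j - a)^2 + b^2) := by positivity
    have hd := hDne j
    have hτj := hτpos j
    have hkey : ν j = (G * ((τ j - a)^2 + b^2) *
        ((∏ k, (t k - τ j)) * ∏ k ∈ Finset.univ.erase j, (τ k - τ j))) /
        ((γg + 1) * τ j * (∏ k ∈ Finset.univ.erase j, (τ k - τ j))^2) := by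
      rw [hν]
      field_simp
    rw [hkey]
    have h1 := hpair j
    have h2 : (0:ℝ) < (∏ k ∈ Finset.univ.erase j, (τ k - τ j))^2 := by positivity
    positivity
  -- factorization identity
  have hFact : Ppoly γg (σ₀ + T) t s = C (-(γg+1)) * lampoly τ := by
    refine polyEqOfValues (N := m+1) _ _ (Ppoly_natDegree_le _ _ _ _) ?_ ?_ τ hτmono.injective ?_
    · refine le_trans natDegree_mul_le ?_
      rw [natDegree_C, zero_add, lam_natDegree]
    · rw [Ppoly_coeff_top, coeff_C_mul, lam_coeff_top, pow_succ]
      ring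
    · intro i
      rw [heval i, eval_mul, eval_C, eval_lam]
      rw [Finset.prod_eq_zero (Finset.mem_univ i) (by ring)]
      ring
  have hprodτ : (γg + 1) * ∏ j, τ j = (σ₀ + T) * ∏ k, t k := by
    have h0 := congrArg (Polynomial.eval 0) hFact
    rw [eval_Ppoly_zero, eval_mul, eval_C, eval_lam] at h0
    simp only [sub_zero] at h0
    linarith [h0]
  -- main identity
  refine ⟨ν, τ, hνpos, hτ0, hint, hFact, ?_⟩
  refine polyEqOfValues (N := m+2) _ _ (PApoly_natDegree_le _ _ _ _ _ _ _ _) ?_ ?_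
    (Fin.cases 0 τ) ?_ ?_
  · refine le_trans natDegree_mul_le ?_
    rw [natDegree_C, zero_add]
    exact le_trans (Ppoly_natDegree_le _ _ _ _) (by omega)
  · rw [PApoly_coeff_top, coeff_C_mul, Ppoly_coeff_top, pow_succ]
    field_simp
    ring
  · -- injectivity of Fin.cases 0 τ
    have : StrictMono (Fin.cases 0 τ : Fin (m+2) → ℝ) := by
      rw [Fin.strictMono_iff_lt_succ]
      intro i
      induction i using Fin.cases with
      | zero => rw [Fin.cases_succ]; simpa using hτ0
      | succ k =>
        rw [← Fin.succ_castSucc]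
        simpa using hτmono (Fin.castSucc_lt_succ : k.castSucc < k.succ)
    exact this.injective
  · intro i
    induction i using Fin.cases with
    | zero =>
      simp only [Fin.cases_zero]
      rw [eval_PApoly, eval_Ppoly_zero, eval_mul, eval_C, eval_Ppoly_zero]
      simp only [sub_zero]
      have hstep : (σ₀ * U / (σ₀ + T)) * ((γg + 1) * ∏ j, τ j) = σ₀ * U * ∏ k, t k := by
        rw [hprodτ]
        field_simp
      linear_combination (-1 : ℝ) * hstep + (∏ k, t k) * hc2
    | succ i =>
      simp only [Fin.cases_succ]
      rw [eval_PApoly, heval i, eval_mul, eval_C, eval_Ppoly_t]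
      have hd := hDne i
      have hτi := ne_of_gt (hτpos i)
      rw [hν]
      field_simp
      ring

open Complex in
lemma aeval_lam {m : ℕ} (t : Fin m → ℝ) (z : ℂ) :
    Polynomial.aeval z (lampoly t) = ∏ k, ((t k : ℂ) - z) := by
  simp [lampoly, Complex.coe_algebraMap]

open Complex in
lemma aeval_Ppoly {m : ℕ} (γg σ₀T : ℝ) (t s : Fin m → ℝ) (z : ℂ) :
    Polynomial.aeval z (Ppoly γg σ₀T t s) =
      ((γg : ℂ) + 1) * (z * ∏ k, ((t k : ℂ) - z)) - (σ₀T : ℂ) * ∏ k, ((t k : ℂ) - z) +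
        ∑ j, (s j : ℂ) * (z * ∏ k ∈ Finset.univ.erase j, ((t k : ℂ) - z)) := by
  simp [Ppoly, lampoly, sumpoly, Complex.coe_algebraMap, Complex.ofReal_add]

open Complex in
lemma aeval_PApoly {m : ℕ} (γg σ₀T G U a b2 : ℝ) (t s : Fin m → ℝ) (z : ℂ) :
    Polynomial.aeval z (PApoly γg σ₀T G U a b2 t s) =
      ((G : ℂ) * z - (U : ℂ)) * Polynomial.aeval z (Ppoly γg σ₀T t s) -
        (G : ℂ) * ((z - (a : ℂ)) ^ 2 + (b2 : ℂ)) * ∏ k, ((t k : ℂ) - z) := by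
  have h := aeval_lam t z
  simp only [PApoly, _root_.map_sub, _root_.map_add, _root_.map_mul, aeval_X, aeval_C, Complex.coe_algebraMap, h]
  push_cast
  ring

lemma denom_ne_zero {m : ℕ} (γg σ₀T : ℝ) (hγg : 0 ≤ γg) (hσ₀T : 0 < σ₀T)
    (t s : Fin m → ℝ) (hs : ∀ j, 0 < s j) (ht : ∀ j, 0 < t j)
    (z : ℂ) (hz : ¬ (0 ≤ z.re ∧ z.im = 0)) (htz : ∀ k, ((t k : ℂ) - z) ≠ 0) :
    ((γg : ℂ) + 1) * z - (σ₀T : ℂ) + ∑ j, (s j : ℂ) * (z / ((t j : ℂ) - z)) ≠ 0 := by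
  set E : ℂ := ((γg : ℂ) + 1) * z - (σ₀T : ℂ) + ∑ j, (s j : ℂ) * (z / ((t j : ℂ) - z)) with hE
  have hnsq : ∀ k, 0 < Complex.normSq ((t k : ℂ) - z) := fun k =>
    Complex.normSq_pos.mpr (htz k)
  have h2 : ∀ j : Fin m, ((t j : ℂ) - z).re = t j - z.re := fun j => by simp
  have h3 : ∀ j : Fin m, ((t j : ℂ) - z).im = -z.im := fun j => by simp
  by_cases him : z.im = 0
  · have hre : z.re < 0 := by
      by_contra h
      push_neg at h
      exact hz ⟨h, him⟩
    have hterm : ∀ j : Fin m, (z / ((t j : ℂ) - z)).re ≤ 0 := by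
      intro j
      rw [Complex.div_re, h2, h3, him]
      simp only [neg_zero, mul_zero, zero_mul, zero_div, sub_zero, add_zero]
      have h4 : z.re * (t j - z.re) ≤ 0 :=
        mul_nonpos_of_nonpos_of_nonneg hre.le (by nlinarith [ht j])
      exact div_nonpos_of_nonpos_of_nonneg h4 (Complex.normSq_nonneg _)
    intro h0
    have hEre : E.re = 0 := by rw [h0]; simp
    rw [hE] at hEre
    simp only [Complex.add_re, Complex.sub_re, Complex.mul_re, Complex.add_im,
      Complex.ofReal_re, Complex.ofReal_im, Complex.one_re, Complex.one_im, Complex.re_sum,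
      zero_mul, mul_zero, sub_zero, add_zero, zero_add] at hEre
    have hsum : ∑ x, s x * (z / ((t x : ℂ) - z)).re ≤ 0 :=
      Finset.sum_nonpos (fun j _ => mul_nonpos_of_nonneg_of_nonpos (hs j).le (hterm j))
    have hneg : (γg + 1) * z.re < 0 := mul_neg_of_pos_of_neg (by linarith) hre
    nlinarith [hEre, hsum, hneg, hσ₀T]
  · have hterm : ∀ j : Fin m, s j * (z / ((t j : ℂ) - z)).im =
        z.im * (s j * t j / Complex.normSq ((t j : ℂ) - z)) := by
      intro j
      rw [Complex.div_im, h2, h3]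
      field_simp
      ring
    have hEim : E.im = z.im * ((γg + 1) + ∑ j, s j * t j / Complex.normSq ((t j : ℂ) - z)) := by
      rw [hE]
      simp only [Complex.add_im, Complex.sub_im, Complex.mul_im, Complex.ofReal_re,
        Complex.ofReal_im, Complex.add_re, Complex.one_re, Complex.one_im, Complex.im_sum,
        zero_mul, mul_zero, sub_zero, add_zero, zero_add]
      rw [Finset.sum_congr rfl (fun j _ => hterm j), ← Finset.mul_sum]
      ring
    have hpos : 0 < (γg + 1) + ∑ j, s j * t j / Complex.normSq ((t j : ℂ) - z) := by
      have : 0 ≤ ∑ j, s j * t j / Complex.normSq ((t j : ℂ) - z) :=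
        Finset.sum_nonneg (fun j _ =>
          div_nonneg (by nlinarith [hs j, ht j]) (Complex.normSq_nonneg _))
      linarith
    intro h0
    rw [h0] at hEim
    simp only [Complex.zero_im] at hEim
    rcases mul_eq_zero.mp hEim.symm with h | h
    · exact him h
    · exact (ne_of_gt hpos) h
theorem statement17 (z₁ w₁ : ℂ) (hz₁ : 0 < z₁.im) (hw₁ : 0 < w₁.im)
    (hzw : 0 < (z₁ * w₁).im)
    (n : ℕ) (γg σ₀ : ℝ) (hγg : 0 ≤ γg) (hσ₀ : 0 ≤ σ₀)
    (t s : Fin n → ℝ) (hs : ∀ j, 0 < s j) (ht : ∀ j, 0 < t j) (hmono : StrictMono t)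
    (g f : ℂ → ℂ)
    (hg : ∀ z ∈ SDom, g z = (γg : ℂ) - (σ₀ : ℂ) / z + ∑ j, (s j : ℂ) / ((t j : ℂ) - z))
    (hf : ∀ z ∈ SDom, f z =
      (g z * ((gammaStar z₁ w₁ : ℂ) * z - (sigmaUpStar z₁ w₁ : ℂ)) - (sigmaStar z₁ w₁ : ℂ)) /
        (z * g z + z - (tstar z₁ w₁ : ℂ))) :
    ∃ ν τ : Fin (n + 1) → ℝ,
      (∀ j, 0 < ν j) ∧ 0 < τ 0 ∧
      (∀ j : Fin n, τ j.castSucc < t j ∧ t j < τ j.succ) ∧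
      ∀ z ∈ SDom, f z =
        ((gammaStar z₁ w₁ * γg / (γg + 1) : ℝ) : ℂ) -
          ((σ₀ * sigmaUpStar z₁ w₁ / (σ₀ + tstar z₁ w₁) : ℝ) : ℂ) / z +
          ∑ j, (ν j : ℂ) / ((τ j : ℂ) - z) := by
  have hz₁ne : z₁.im ≠ 0 := ne_of_gt hz₁
  have hw₁ne : w₁.im ≠ 0 := ne_of_gt hw₁
  set T := tstar z₁ w₁ with hTdef
  set S := sigmaStar z₁ w₁ with hSdef
  set G := gammaStar z₁ w₁ with hGdef
  set U := sigmaUpStar z₁ w₁ with hUdef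
  have hT : 0 < T := div_pos hzw hw₁
  have hG : 0 < G := div_pos hzw hz₁
  have hc2 : U * T = G * (z₁.re ^ 2 + z₁.im ^ 2) := by
    rw [hUdef, hTdef, hGdef, sigmaUpStar, tstar, gammaStar, Complex.sq_norm,
      Complex.normSq_apply]
    field_simp
  have hc1 : G * T + U - S = 2 * G * z₁.re := by
    rw [hUdef, hTdef, hGdef, hSdef, sigmaUpStar, tstar, gammaStar, sigmaStar,
      Complex.sq_norm, Complex.sq_norm, Complex.normSq_apply, Complex.normSq_apply,
      Complex.mul_im]
    field_simp
    ring
  obtain ⟨ν, τ, hνpos, hτ0, hint, hFact, hA⟩ :=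
    real_side γg σ₀ T G U z₁.re z₁.im hγg hσ₀ hT hG hz₁ hc2 t s hs ht hmono
  have hτmono : StrictMono τ := by
    rw [Fin.strictMono_iff_lt_succ]
    intro i
    exact lt_trans (hint i).1 (hint i).2
  have hτpos : ∀ j, 0 < τ j := fun j => lt_of_lt_of_le hτ0 (hτmono.monotone (Fin.zero_le j))
  have hγ1 : (0:ℝ) < γg + 1 := by linarith
  refine ⟨ν, τ, hνpos, hτ0, hint, ?_⟩
  intro z hzmem
  have hz' : ¬ (0 ≤ z.re ∧ z.im = 0) := hzmem
  have znz : z ≠ 0 := by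
    intro h
    exact hz' (by rw [h]; simp)
  have tnz : ∀ k, ((t k : ℂ) - z) ≠ 0 := by
    intro k h
    rw [sub_eq_zero] at h
    exact hz' (by rw [← h]; simp [(ht k).le])
  have τnz : ∀ j, ((τ j : ℂ) - z) ≠ 0 := by
    intro j h
    rw [sub_eq_zero] at h
    exact hz' (by rw [← h]; simp [(hτpos j).le])
  have grw := hg z hzmem
  have frw := hf z hzmem
  set Pl : ℂ := ∏ k, ((t k : ℂ) - z) with hPl
  set Plτ : ℂ := ∏ j, ((τ j : ℂ) - z) with hPlτ
  have hPlnz : Pl ≠ 0 := Finset.prod_ne_zero_iff.mpr (fun k _ => tnz k)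
  have hPlτnz : Plτ ≠ 0 := Finset.prod_ne_zero_iff.mpr (fun j _ => τnz j)
  have hσz : (σ₀ : ℂ) / z * z = σ₀ := div_mul_cancel₀ _ znz
  have hWsum : z * ∑ j, (s j : ℂ) / ((t j : ℂ) - z) =
      ∑ j, (s j : ℂ) * (z / ((t j : ℂ) - z)) := by
    rw [Finset.mul_sum]
    exact Finset.sum_congr rfl (fun j _ => by ring)
  have hden0 : z * g z + z - (T : ℂ) =
      ((γg : ℂ) + 1) * z - ((σ₀ + T : ℝ) : ℂ) + ∑ j, (s j : ℂ) * (z / ((t j : ℂ) - z)) := by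
    rw [grw]
    push_cast
    linear_combination (-1 : ℂ) * hσz + hWsum
  have hdennz : z * g z + z - (T : ℂ) ≠ 0 := by
    rw [hden0]
    exact denom_ne_zero γg (σ₀ + T) hγg (by linarith) t s hs ht z hz' tnz
  -- e1
  have hterm : ∀ j : Fin n, (s j : ℂ) * (z / ((t j : ℂ) - z)) * Pl =
      (s j : ℂ) * (z * ∏ k ∈ Finset.univ.erase j, ((t k : ℂ) - z)) := by
    intro j
    rw [hPl, ← Finset.mul_prod_erase _ _ (Finset.mem_univ j)]
    have hc : z / ((t j : ℂ) - z) * ((t j : ℂ) - z) = z := div_mul_cancel₀ z (tnz j)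
    linear_combination ((s j : ℂ) * ∏ k ∈ Finset.univ.erase j, ((t k : ℂ) - z)) * hc
  have hsumPl : (∑ j, (s j : ℂ) * (z / ((t j : ℂ) - z))) * Pl =
      ∑ j, (s j : ℂ) * (z * ∏ k ∈ Finset.univ.erase j, ((t k : ℂ) - z)) := by
    rw [Finset.sum_mul]
    exact Finset.sum_congr rfl (fun j _ => hterm j)
  have e1 : Polynomial.aeval z (Ppoly γg (σ₀ + T) t s) = (z * g z + z - (T : ℂ)) * Pl := by
    rw [aeval_Ppoly, hden0, ← hPl]
    linear_combination (-1 : ℂ) * hsumPl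
  -- complex Δ identity
  have hc1' : (G : ℂ) * T + U - S = 2 * G * (z₁.re : ℂ) := by exact_mod_cast hc1
  have hc2' : (U : ℂ) * T = G * ((z₁.re : ℂ) ^ 2 + (z₁.im : ℂ) ^ 2) := by exact_mod_cast hc2
  have hΔ : ((G : ℂ) * z - U) * (z - T) + S * z =
      (G : ℂ) * ((z - (z₁.re : ℂ)) ^ 2 + ((z₁.im ^ 2 : ℝ) : ℂ)) := by
    push_cast
    linear_combination (-z) * hc1' + hc2'
  have e2 : z * (g z * ((G : ℂ) * z - U) - S) * Pl =
      Polynomial.aeval z (PApoly γg (σ₀ + T) G U z₁.re (z₁.im ^ 2) t s) := by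
    rw [aeval_PApoly, e1]
    linear_combination (-Pl) * hΔ
  -- factorization mapped to ℂ
  have hFactC : (z * g z + z - (T : ℂ)) * Pl = (-((γg : ℂ) + 1)) * Plτ := by
    have h := congrArg (Polynomial.aeval z) hFact
    rw [e1, _root_.map_mul, Polynomial.aeval_C, aeval_lam, Complex.coe_algebraMap] at h
    rw [h, hPlτ]
    push_cast
    ring
  -- main identity mapped to ℂ
  have hAC : z * (g z * ((G : ℂ) * z - U) - S) * Pl =
      (-((γg : ℂ) + 1)) *
        Polynomial.aeval z (Ppoly (G * γg / (γg + 1) - 1) (σ₀ * U / (σ₀ + T)) τ ν) := by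
    have h := congrArg (Polynomial.aeval z) hA
    rw [_root_.map_mul, Polynomial.aeval_C, Complex.coe_algebraMap] at h
    rw [e2, h]
    push_cast
    ring
  -- final computation
  have hcast : ((G * γg / (γg + 1) - 1 : ℝ) : ℂ) + 1 = ((G * γg / (γg + 1) : ℝ) : ℂ) := by
    push_cast
    ring
  have hPBev : Polynomial.aeval z (Ppoly (G * γg / (γg + 1) - 1) (σ₀ * U / (σ₀ + T)) τ ν) =
      ((G * γg / (γg + 1) : ℝ) : ℂ) * (z * Plτ) - ((σ₀ * U / (σ₀ + T) : ℝ) : ℂ) * Plτ +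
        ∑ j, (ν j : ℂ) * (z * ∏ k ∈ Finset.univ.erase j, ((τ k : ℂ) - z)) := by
    rw [aeval_Ppoly, hcast, hPlτ]
  have hsum2 : ∀ j : Fin (n+1), (ν j : ℂ) / ((τ j : ℂ) - z) * (z * Plτ) =
      (ν j : ℂ) * (z * ∏ k ∈ Finset.univ.erase j, ((τ k : ℂ) - z)) := by
    intro j
    rw [hPlτ, ← Finset.mul_prod_erase _ _ (Finset.mem_univ j)]
    have hc : z / ((τ j : ℂ) - z) * ((τ j : ℂ) - z) = z := div_mul_cancel₀ z (τnz j)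
    linear_combination ((ν j : ℂ) * ∏ k ∈ Finset.univ.erase j, ((τ k : ℂ) - z)) * hc
  have hν₀z : ((σ₀ * U / (σ₀ + T) : ℝ) : ℂ) / z * (z * Plτ) =
      ((σ₀ * U / (σ₀ + T) : ℝ) : ℂ) * Plτ := by
    have hzz : z⁻¹ * z = 1 := inv_mul_cancel₀ znz
    linear_combination (((σ₀ * U / (σ₀ + T) : ℝ) : ℂ) * Plτ) * hzz
  have hzPlnz : z * Pl ≠ 0 := mul_ne_zero znz hPlnz
  have hzPlτnz : z * Plτ ≠ 0 := mul_ne_zero znz hPlτnz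
  have hneg1 : (-((γg : ℂ) + 1)) ≠ 0 := by
    intro h
    rw [neg_eq_zero] at h
    have : ((γg + 1 : ℝ) : ℂ) = 0 := by push_cast; exact h
    exact (ne_of_gt hγ1) (by exact_mod_cast this)
  rw [frw]
  rw [← mul_div_mul_left (g z * ((G:ℂ) * z - U) - S) (z * g z + z - (T:ℂ)) hzPlnz]
  have hnum : z * Pl * (g z * ((G:ℂ) * z - U) - S) =
      (-((γg : ℂ) + 1)) *
        Polynomial.aeval z (Ppoly (G * γg / (γg + 1) - 1) (σ₀ * U / (σ₀ + T)) τ ν) := by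
    rw [← hAC]; ring
  have hdenom : z * Pl * (z * g z + z - (T:ℂ)) = (-((γg : ℂ) + 1)) * (z * Plτ) := by
    calc z * Pl * (z * g z + z - (T:ℂ)) = z * ((z * g z + z - (T:ℂ)) * Pl) := by ring
    _ = z * ((-((γg : ℂ) + 1)) * Plτ) := by rw [hFactC]
    _ = (-((γg : ℂ) + 1)) * (z * Plτ) := by ring
  rw [hnum, hdenom, mul_div_mul_left _ _ hneg1]
  rw [div_eq_iff hzPlτnz, hPBev, add_mul, sub_mul, Finset.sum_mul,
    Finset.sum_congr rfl (fun j _ => hsum2 j), hν₀z]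
end
end
end
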